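/- arXiv:2012.15431 — 15 statements merged into one kernel-verified Lean document; each statement's English description precedes it below -/
import Mathlib

section
/- Let (A_i)_{i∈I} be a family of topological abelian groups with linear topology, and equip the direct sum ⊕_{i∈I} A_i with the coproduct topology. (a) If every A_i is separated, then ⊕_{i∈I} A_i is separated. (b) If every A_i is complete, then ⊕_{i∈I} A_i is complete. -/
/-!
Linearity of the topologies makes every evaluation `f ↦ f i` continuous, so the direct sum
injects continuously into the product, which is Hausdorff when the `A i` are.

For completeness, the projections `Fᵢ` of a Cauchy filter `F` are Cauchy and have limits `yᵢ`.
Choose open subgroups `Vᵢ` that belong to `Fᵢ` only if `Fᵢ → 0`. Some coset `g + ⊕ Vᵢ` lies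
in `F`, so `Fᵢ → 0` wherever `g i = 0`, and the limits can be taken finitely supported.
Comparing cosets of a basic subgroup `⊕ Uᵢ` in `F` and in the `Fᵢ` then shows `F → (yᵢ)`.
-/

open Filter Topology

def HasLinearTopology (A : Type*) [AddCommGroup A] [TopologicalSpace A] : Prop :=
  ∀ s ∈ nhds (0 : A), ∃ U : AddSubgroup A, IsOpen (U : Set A) ∧ (U : Set A) ⊆ s

def IsCompleteTAG (A : Type*) [AddCommGroup A] [TopologicalSpace A] [IsTopologicalAddGroup A] :
    Prop :=
  @CompleteSpace A (IsTopologicalAddGroup.rightUniformSpace A)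

theorem HasLinearTopology.exists_isOpen_forall_mem_le_nhds_zero {A : Type*} [AddCommGroup A]
    [TopologicalSpace A] (hA : HasLinearTopology A) (G : Filter A) :
    ∃ V : AddSubgroup A, IsOpen (V : Set A) ∧ ((V : Set A) ∈ G → G ≤ 𝓝 0) := by
  by_cases hG : G ≤ 𝓝 0
  · exact ⟨⊤, by simp, fun _ => hG⟩
  · obtain ⟨s, hs, hsG⟩ := Filter.not_le.1 hG
    obtain ⟨V, hVo, hVs⟩ := hA s hs
    exact ⟨V, hVo, fun hVG => absurd (mem_of_superset hVG hVs) hsG⟩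

theorem Cauchy.exists_sub_mem {G : Type*} [UniformSpace G] [AddGroup G] [IsUniformAddGroup G]
    {F : Filter G} (hF : Cauchy F) {U : Set G} (hU : U ∈ 𝓝 0) :
    ∃ g, {h | h - g ∈ U} ∈ F := by
  obtain ⟨t, htF, ht⟩ :=
    ((𝓝 (0 : G)).basis_sets.uniformity_of_nhds_zero.cauchy_iff.1 hF).2 U hU
  obtain ⟨g, hg⟩ := hF.1.nonempty_of_mem htF
  exact ⟨g, mem_of_superset htF fun h hh => ht g hg h hh⟩

namespace DFinsupp

variable {I : Type*} {A : I → Type*} [∀ i, AddCommGroup (A i)]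

def IsCoproductTopology (A : I → Type*) [∀ i, AddCommGroup (A i)]
    [∀ i, TopologicalSpace (A i)] [TopologicalSpace (Π₀ i, A i)] : Prop :=
  (𝓝 (0 : Π₀ i, A i)).HasBasis
    (fun U : ∀ i, AddSubgroup (A i) => ∀ i, IsOpen (U i : Set (A i)))
    (fun U => {f : Π₀ i, A i | ∀ i, f i ∈ U i})

namespace IsCoproductTopology

variable [∀ i, TopologicalSpace (A i)]

theorem continuous_eval [∀ i, IsTopologicalAddGroup (A i)] [TopologicalSpace (Π₀ i, A i)]
    [IsTopologicalAddGroup (Π₀ i, A i)] (h : IsCoproductTopology A) {i : I}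
    (hA : HasLinearTopology (A i)) : Continuous fun f : Π₀ i, A i => f i := by
  classical
  refine continuous_of_continuousAt_zero (evalAddMonoidHom i) fun s hs => ?_
  obtain ⟨V, hVo, hVs⟩ := hA s (by simpa using hs)
  have hU : ∀ j, IsOpen
      (Function.update (fun j => (⊤ : AddSubgroup (A j))) i V j : Set (A j)) := by
    intro j
    rcases eq_or_ne j i with rfl | hj
    · simpa
    · simp [hj]
  exact mem_map.2 <| mem_of_superset (h.mem_of_mem hU) fun f hf =>
    hVs (by simpa using hf i : f i ∈ V)

theorem t2Space [∀ i, IsTopologicalAddGroup (A i)] [∀ i, T2Space (A i)]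
    [TopologicalSpace (Π₀ i, A i)] [IsTopologicalAddGroup (Π₀ i, A i)]
    (h : IsCoproductTopology A) (hlin : ∀ i, HasLinearTopology (A i)) : T2Space (Π₀ i, A i) :=
  .of_injective_continuous DFunLike.coe_injective
    (continuous_pi fun _ => h.continuous_eval (hlin _))

variable [UniformSpace (Π₀ i, A i)] [IsUniformAddGroup (Π₀ i, A i)]

theorem le_nhds_of_cauchy [∀ i, IsTopologicalAddGroup (A i)] (h : IsCoproductTopology A)
    {F : Filter (Π₀ i, A i)} (hF : Cauchy F) {x : Π₀ i, A i}
    (hx : ∀ i, F.map (· i) ≤ 𝓝 (x i)) : F ≤ 𝓝 x := by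
  rw [← map_add_left_nhds_zero x]
  refine (h.map (x + ·)).ge_iff.2 fun U hU => ?_
  obtain ⟨g, hg⟩ := hF.exists_sub_mem (h.mem_of_mem hU)
  have hgx : ∀ i, g i - x i ∈ U i := by
    intro i
    have hxU : {c | c - x i ∈ U i} ∈ 𝓝 (x i) :=
      ((hU i).preimage (continuous_sub_right _)).mem_nhds (by simp)
    have hgU : {c | c - g i ∈ U i} ∈ F.map (· i) :=
      mem_map.2 <| mem_of_superset hg fun f hf => by simpa using hf i
    obtain ⟨c, hcg, hcx⟩ := (hF.1.map _).nonempty_of_mem (inter_mem hgU (hx i hxU))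
    have hcx : c - x i ∈ U i := hcx
    have hcg : c - g i ∈ U i := hcg
    simpa using sub_mem hcx hcg
  refine mem_of_superset hg fun f hf => ⟨f - x, fun i => ?_, by simp⟩
  simpa using add_mem (hf i) (hgx i)

theorem exists_forall_map_le_nhds (h : IsCoproductTopology A)
    (hlin : ∀ i, HasLinearTopology (A i)) {F : Filter (Π₀ i, A i)} (hF : Cauchy F)
    (hlim : ∀ i, ∃ y, F.map (· i) ≤ 𝓝 y) :
    ∃ x : Π₀ i, A i, ∀ i, F.map (· i) ≤ 𝓝 (x i) := by
  classical
  choose y hy using hlim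
  choose V hVo hV using fun i => (hlin i).exists_isOpen_forall_mem_le_nhds_zero (F.map (· i))
  obtain ⟨g, hg⟩ := hF.exists_sub_mem (h.mem_of_mem hVo)
  refine ⟨mk g.support fun i => y i, fun i => ?_⟩
  by_cases hi : i ∈ g.support
  · simpa [hi] using hy i
  · have hgi : g i = 0 := by simpa using hi
    simp only [mk_apply, hi, dite_false]
    exact hV i <| mem_map.2 <| mem_of_superset hg fun f hf => by simpa [hgi] using hf i

end IsCoproductTopology

theorem IsCoproductTopology.completeSpace [∀ i, UniformSpace (A i)]
    [∀ i, IsUniformAddGroup (A i)] [∀ i, CompleteSpace (A i)] [UniformSpace (Π₀ i, A i)]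
    [IsUniformAddGroup (Π₀ i, A i)] (h : IsCoproductTopology A)
    (hlin : ∀ i, HasLinearTopology (A i)) : CompleteSpace (Π₀ i, A i) := by
  refine ⟨fun {F} hF => ?_⟩
  have hFi : ∀ i, Cauchy (F.map (· i)) := fun i =>
    hF.map <| uniformContinuous_of_continuousAt_zero (evalAddMonoidHom i)
      (h.continuous_eval (hlin i)).continuousAt
  obtain ⟨x, hx⟩ := h.exists_forall_map_le_nhds hlin hF fun i => CompleteSpace.complete (hFi i)
  exact ⟨x, h.le_nhds_of_cauchy hF hx⟩

end DFinsupp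

/-- Let `(A i)_{i ∈ I}` be a family of topological abelian groups with linear
topology and equip the direct sum `⊕_{i ∈ I} A i` (formalized as `Π₀ i, A i`) with the coproduct
topology, i.e. the group topology in which the subgroups `⊕ᵢ Uᵢ`, with each `Uᵢ ⊆ A i` an open
subgroup, form a basis of neighborhoods of `0`.
(a) If every `A i` is separated then so is the direct sum.
(b) If every `A i` is complete then so is the direct sum. -/
theorem statement1 {I : Type*} {A : I → Type*} [∀ i, AddCommGroup (A i)]
    [∀ i, TopologicalSpace (A i)] [∀ i, IsTopologicalAddGroup (A i)]
    (hlin : ∀ i, HasLinearTopology (A i))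
    (τ : TopologicalSpace (Π₀ i, A i))
    (hgrp : @IsTopologicalAddGroup (Π₀ i, A i) τ _)
    (hbasis : (@nhds _ τ 0).HasBasis
      (fun U : ∀ i, AddSubgroup (A i) => ∀ i, IsOpen (U i : Set (A i)))
      (fun U => {f : Π₀ i, A i | ∀ i, f i ∈ U i})) :
    ((∀ i, T2Space (A i)) → @T2Space (Π₀ i, A i) τ) ∧
    ((∀ i, IsCompleteTAG (A i)) →
      @CompleteSpace (Π₀ i, A i) (@IsTopologicalAddGroup.rightUniformSpace _ _ τ hgrp)) := by
  let := τ
  refine ⟨fun _ => DFinsupp.IsCoproductTopology.t2Space hbasis hlin, fun hcomp => ?_⟩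
  let (i : I) : UniformSpace (A i) := IsTopologicalAddGroup.rightUniformSpace (A i)
  have (i : I) : IsUniformAddGroup (A i) := isUniformAddGroup_of_addCommGroup
  have (i : I) : CompleteSpace (A i) := hcomp i
  let := IsTopologicalAddGroup.rightUniformSpace (Π₀ i, A i)
  have : IsUniformAddGroup (Π₀ i, A i) := isUniformAddGroup_of_addCommGroup
  exact DFinsupp.IsCoproductTopology.completeSpace hbasis hlin
end

section
/- Let A be a complete, separated topological abelian group with linear topology, and let K ⊆ A be a closed subgroup such that K, equipped with the subspace topology, has a countable basis of neighborhoods of 0. Then the quotient group A/K, equipped with the quotient topology, is separated and complete. -/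
open Filter Topology

/-!
Let `π : A → A ⧸ K` and let `F` be a Cauchy filter on `A ⧸ K`. Choose open subgroups
`U₀ ⊇ U₁ ⊇ ⋯` of `A` whose traces on `K` form a neighbourhood basis of `0` in `K`, and inductively
nested cosets `bₙ + Uₙ` whose images belong to `F`. The filter on `A` generated by `π⁻¹ F` and
these cosets is Cauchy: for an open subgroup `V` pick `n` with `Uₙ ∩ K ⊆ V`; two points of
`bₙ + Uₙ` whose images are `π (V ∩ Uₙ)`-close differ by an element of
`(V ∩ Uₙ + K) ∩ Uₙ = V ∩ Uₙ + K ∩ Uₙ ⊆ V` (modular law). Its limit in `A` maps to a cluster point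
of `F`, hence to a limit of `F`. Separation holds because `K` is closed.
-/

open Uniformity
open scoped Pointwise

/-- For proper filters on a linearly topologized group this is equivalent to being Cauchy for the
canonical uniformity, but it needs no choice of uniform structure. -/
def CauchyModOpenSubgroups {G : Type*} [AddGroup G] [TopologicalSpace G] (F : Filter G) : Prop :=
  ∀ H : OpenAddSubgroup G, ∃ S ∈ F, ∀ x ∈ S, ∀ y ∈ S, y - x ∈ H

theorem inf_sup_inf_le_of_inf_le {α : Type*} [Lattice α] [IsModularLattice α] {u v k : α}
    (h : u ⊓ k ≤ v) : (v ⊓ u ⊔ k) ⊓ u ≤ v := by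
  rw [sup_inf_assoc_of_le k inf_le_right, inf_comm k]
  exact sup_le inf_le_left h

section UniformGroup

variable {G : Type*} [UniformSpace G] [AddCommGroup G] [IsUniformAddGroup G] {F : Filter G}

theorem Cauchy.cauchyModOpenSubgroups (hF : Cauchy F) : CauchyModOpenSubgroups F := by
  intro H
  have hH : {p : G × G | p.2 - p.1 ∈ H} ∈ 𝓤 G := by
    rw [uniformity_eq_comap_nhds_zero G]
    exact preimage_mem_comap (H.isOpen.mem_nhds H.zero_mem)
  obtain ⟨S, hS, hSS⟩ := mem_prod_same_iff.1 (hF.2 hH)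
  exact ⟨S, hS, fun x hx y hy => hSS (Set.mk_mem_prod hx hy)⟩

theorem HasLinearTopology.cauchy_of_cauchyModOpenSubgroups (hlin : HasLinearTopology G)
    [F.NeBot] (hF : CauchyModOpenSubgroups F) : Cauchy F := by
  refine ⟨‹_›, ?_⟩
  rw [uniformity_eq_comap_nhds_zero G, ← map_le_iff_le_comap]
  intro t ht
  obtain ⟨V, hVo, hVt⟩ := hlin t ht
  obtain ⟨S, hS, hSS⟩ := hF ⟨V, hVo⟩
  exact mem_map.2 <| mem_of_superset (prod_mem_prod hS hS)
    fun p (hp : p ∈ S ×ˢ S) => hVt (hSS _ hp.1 _ hp.2)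

end UniformGroup

theorem CompleteSpace.of_exists_cauchy_map_le {α β : Type*} [UniformSpace α] [UniformSpace β]
    [CompleteSpace α] {f : α → β} (hf : Continuous f)
    (h : ∀ F : Filter β, Cauchy F → ∃ G : Filter α, Cauchy G ∧ map f G ≤ F) :
    CompleteSpace β := by
  refine ⟨fun {F} hF => ?_⟩
  obtain ⟨G, hG, hGF⟩ := h F hF
  obtain ⟨x, hx⟩ := CompleteSpace.complete hG
  have := hG.1.map f
  exact ⟨f x, le_nhds_of_cauchy_adhp hF
    (NeBot.mono ‹_› (le_inf ((hf.tendsto x).mono_left hx) hGF))⟩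

theorem CauchyModOpenSubgroups.eventually_vadd_mem {G : Type*} [AddCommGroup G]
    [TopologicalSpace G] {F : Filter G} (hF : CauchyModOpenSubgroups F) (H : OpenAddSubgroup G) :
    ∀ᶠ y in F, y +ᵥ (H : Set G) ∈ F := by
  obtain ⟨S, hS, hSS⟩ := hF H
  filter_upwards [hS] with y hy
  refine mem_of_superset hS fun x hx => ?_
  rw [mem_leftAddCoset_iff, neg_add_eq_sub]
  exact hSS y hy x hx

theorem HasLinearTopology.exists_antitone_openAddSubgroup {A : Type*} [AddCommGroup A]
    [TopologicalSpace A] (hlin : HasLinearTopology A) (K : AddSubgroup A)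
    [(𝓝 (0 : K)).IsCountablyGenerated] :
    ∃ U : ℕ → OpenAddSubgroup A, Antitone U ∧
      ∀ V : OpenAddSubgroup A, ∃ n, (U n : AddSubgroup A) ⊓ K ≤ V := by
  obtain ⟨s, hs⟩ := (𝓝 (0 : K)).exists_antitone_basis
  have hV : ∀ n, ∃ V : OpenAddSubgroup A, ((↑) : K → A) ⁻¹' V ⊆ s n := by
    intro n
    have hsn := hs.mem n
    rw [nhds_subtype_eq_comap] at hsn
    obtain ⟨t, ht, hts⟩ := mem_comap.1 hsn
    obtain ⟨V, hVo, hVt⟩ := hlin t ht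
    exact ⟨⟨V, hVo⟩, fun k hk => hts (hVt hk)⟩
  choose V hV using hV
  refine ⟨fun n => (Finset.range (n + 1)).inf V,
    fun m n hmn => Finset.inf_mono (Finset.range_subset_range.2 (by omega)), fun W => ?_⟩
  obtain ⟨n, -, hn⟩ := hs.1.mem_iff.1
    (continuous_subtype_val.continuousAt.preimage_mem_nhds (W.isOpen.mem_nhds W.zero_mem))
  refine ⟨n, fun k ⟨hkU, hkK⟩ => ?_⟩
  have hkV : k ∈ V n := Finset.inf_le (f := V) (Finset.self_mem_range_succ n) hkU
  exact hn (hV n hkV : (⟨k, hkK⟩ : K) ∈ s n)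

section Quotient

variable {A : Type*} [AddCommGroup A] [TopologicalSpace A] [IsTopologicalAddGroup A]
  (K : AddSubgroup A)

def OpenAddSubgroup.mapQuotient (V : OpenAddSubgroup A) : OpenAddSubgroup (A ⧸ K) :=
  ⟨(V : AddSubgroup A).map (QuotientAddGroup.mk' K), QuotientAddGroup.isOpenMap_coe _ V.isOpen⟩

variable {K}

theorem OpenAddSubgroup.coe_mapQuotient (V : OpenAddSubgroup A) :
    (V.mapQuotient K : Set (A ⧸ K)) = QuotientAddGroup.mk' K '' V :=
  AddSubgroup.coe_map _ _

theorem OpenAddSubgroup.mk_mem_mapQuotient {V : OpenAddSubgroup A} {x : A} :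
    (x : A ⧸ K) ∈ V.mapQuotient K ↔ x ∈ (V : AddSubgroup A) ⊔ K := by
  have h := AddSubgroup.comap_map_eq (QuotientAddGroup.mk' K) V
  rw [QuotientAddGroup.ker_mk'] at h
  exact SetLike.ext_iff.1 h x

variable {F : Filter (A ⧸ K)} [F.NeBot]

theorem CauchyModOpenSubgroups.exists_refinement (hF : CauchyModOpenSubgroups F) {b : A}
    {U : AddSubgroup A} (hb : QuotientAddGroup.mk' K '' (b +ᵥ (U : Set A)) ∈ F)
    (W : OpenAddSubgroup A) :
    ∃ u ∈ U, QuotientAddGroup.mk' K '' ((b + u) +ᵥ (W : Set A)) ∈ F := by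
  obtain ⟨_, hW, _, ⟨u, hu, rfl⟩, rfl⟩ :=
    ((hF.eventually_vadd_mem (W.mapQuotient K)).and hb).exists
  refine ⟨u, hu, ?_⟩
  rwa [Set.image_vadd_distrib, ← OpenAddSubgroup.coe_mapQuotient]

theorem CauchyModOpenSubgroups.exists_antitone_cosets (hF : CauchyModOpenSubgroups F)
    {U : ℕ → OpenAddSubgroup A} (hU : Antitone U) :
    ∃ b : ℕ → A, Antitone (fun n => b n +ᵥ (U n : Set A)) ∧
      ∀ n, QuotientAddGroup.mk' K '' (b n +ᵥ (U n : Set A)) ∈ F := by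
  choose! g hgU hgF using fun n c (hc : QuotientAddGroup.mk' K '' (c +ᵥ (U n : Set A)) ∈ F) =>
    hF.exists_refinement hc (U (n + 1))
  obtain ⟨b₀, -, hb₀⟩ := hF.exists_refinement (b := 0) (U := ⊤) (by simp) (U 0)
  rw [zero_add] at hb₀
  let b : ℕ → A := fun n => Nat.rec b₀ (fun n c => c + g n c) n
  have hb (n : ℕ) : QuotientAddGroup.mk' K '' (b n +ᵥ (U n : Set A)) ∈ F :=
    Nat.rec hb₀ (fun n ih => hgF n _ ih) n
  refine ⟨b, antitone_nat_of_succ_le fun n => ?_, hb⟩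
  change (b n + g n (b n)) +ᵥ (U (n + 1) : Set A) ⊆ b n +ᵥ (U n : Set A)
  have hcoset : g n (b n) +ᵥ (U n : Set A) = U n :=
    leftAddCoset_mem_leftAddCoset (U n : AddSubgroup A) (hgU n _ (hb n))
  rw [add_vadd, ← hcoset]
  exact Set.vadd_set_mono (Set.vadd_set_mono (hU n.le_succ))

theorem CauchyModOpenSubgroups.exists_lift (hlin : HasLinearTopology A)
    [(𝓝 (0 : K)).IsCountablyGenerated] (hF : CauchyModOpenSubgroups F) :
    ∃ G : Filter A, G.NeBot ∧ CauchyModOpenSubgroups G ∧ map (QuotientAddGroup.mk' K) G ≤ F := by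
  obtain ⟨U, hU, hUK⟩ := hlin.exists_antitone_openAddSubgroup K
  obtain ⟨b, hC, hbF⟩ := hF.exists_antitone_cosets hU
  have hbasis := (F.basis_sets.comap (QuotientAddGroup.mk' K)).inf
    (HasAntitoneBasis.iInf_principal hC).1
  refine ⟨comap (QuotientAddGroup.mk' K) F ⊓ ⨅ n, 𝓟 (b n +ᵥ (U n : Set A)),
    hbasis.neBot_iff.2 fun {i} hi => ?_, fun V => ?_, (map_mono inf_le_left).trans map_comap_le⟩
  · obtain ⟨_, hT, x, hx, rfl⟩ := nonempty_of_mem (inter_mem hi.1 (hbF i.2))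
    exact ⟨x, hT, hx⟩
  · obtain ⟨n, hn⟩ := hUK V
    obtain ⟨S, hS, hSS⟩ := hF ((V ⊓ U n).mapQuotient K)
    refine ⟨_, hbasis.mem_of_mem (i := (S, n)) ⟨hS, trivial⟩, ?_⟩
    rintro x ⟨hxS, hxC⟩ y ⟨hyS, hyC⟩
    have hxyU : y - x ∈ U n := by
      rw [mem_leftAddCoset_iff] at hxC hyC
      simpa using sub_mem hyC hxC
    have hxyVK : y - x ∈ ((V ⊓ U n : OpenAddSubgroup A) : AddSubgroup A) ⊔ K :=
      OpenAddSubgroup.mk_mem_mapQuotient.1 (by simpa using hSS _ hxS _ hyS)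
    exact inf_sup_inf_le_of_inf_le hn ⟨hxyVK, hxyU⟩

end Quotient

theorem isCompleteTAG_quotient {A : Type*} [AddCommGroup A] [TopologicalSpace A]
    [IsTopologicalAddGroup A] (hlin : HasLinearTopology A) (hcomp : IsCompleteTAG A)
    (K : AddSubgroup A) [(𝓝 (0 : K)).IsCountablyGenerated] : IsCompleteTAG (A ⧸ K) := by
  let := IsTopologicalAddGroup.rightUniformSpace A
  let := IsTopologicalAddGroup.rightUniformSpace (A ⧸ K)
  have := isUniformAddGroup_of_addCommGroup (G := A)
  have := isUniformAddGroup_of_addCommGroup (G := A ⧸ K)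
  have : CompleteSpace A := hcomp
  refine CompleteSpace.of_exists_cauchy_map_le QuotientAddGroup.continuous_mk fun F hF => ?_
  have := hF.1
  obtain ⟨G, hG, hGcauchy, hGF⟩ := hF.cauchyModOpenSubgroups.exists_lift hlin
  exact ⟨G, hlin.cauchy_of_cauchyModOpenSubgroups hGcauchy, hGF⟩

theorem statement2_general {A : Type*} [AddCommGroup A] [TopologicalSpace A] [IsTopologicalAddGroup A]
    (hlin : HasLinearTopology A) (hcomp : IsCompleteTAG A)
    (K : AddSubgroup A) (hK : IsClosed (K : Set A))
    (hKcount : (nhds (0 : K)).IsCountablyGenerated) :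
    T2Space (A ⧸ K) ∧ IsCompleteTAG (A ⧸ K) :=
  ⟨inferInstance, isCompleteTAG_quotient hlin hcomp K⟩

/-- Let `A` be a complete, separated topological abelian group with linear
topology, and let `K ⊆ A` be a closed subgroup such that `K`, equipped with the subspace
topology, has a countable basis of neighborhoods of `0`.  Then the quotient group `A ⧸ K`,
equipped with the quotient topology, is separated and complete. -/
theorem statement2 {A : Type*} [AddCommGroup A] [TopologicalSpace A] [IsTopologicalAddGroup A]
    (hlin : HasLinearTopology A) [T2Space A] (hcomp : IsCompleteTAG A)
    (K : AddSubgroup A) (hK : IsClosed (K : Set A))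
    (hKcount : (nhds (0 : K)).IsCountablyGenerated) :
    T2Space (A ⧸ K) ∧ IsCompleteTAG (A ⧸ K) :=
  statement2_general hlin hcomp K hK hKcount
end

section
/- Let (A_i)_{i∈I} be a family of topological abelian groups with linear topology, and equip the product ∏_{i∈I} A_i with the box topology. (a) If every A_i is separated, then ∏_{i∈I} A_i is separated. (b) If every A_i is complete, then ∏_{i∈I} A_i is complete. -/
open Filter Topology

/-!
The box topology is finer than the product topology: a neighbourhood of `0` in `A i` contains an
open subgroup `W`, and `W × ∏_{j ≠ i} A j` is a basic box. So points are separated by coordinates,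
and a Cauchy filter for the box topology converges coordinatewise to some `x`. It converges to `x`
for the box topology as well, because the basic boxes `∏ᵢ Uᵢ` are products of closed subgroups.
-/

def HasBoxNhdsBasis {I : Type*} {A : I → Type*} [∀ i, AddCommGroup (A i)]
    [∀ i, TopologicalSpace (A i)] (τ : TopologicalSpace (∀ i, A i)) : Prop :=
  (@nhds _ τ 0).HasBasis (fun U : ∀ i, AddSubgroup (A i) => ∀ i, IsOpen (U i : Set (A i)))
    (fun U => {f : ∀ i, A i | ∀ i, f i ∈ U i})

namespace HasBoxNhdsBasis

variable {I : Type*} {A : I → Type*} [∀ i, AddCommGroup (A i)] [∀ i, TopologicalSpace (A i)]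
  [∀ i, IsTopologicalAddGroup (A i)] {τ : TopologicalSpace (∀ i, A i)}

theorem continuous_apply (hbasis : HasBoxNhdsBasis τ) (hlin : ∀ i, HasLinearTopology (A i))
    (hgrp : @IsTopologicalAddGroup (∀ i, A i) τ _) (i : I) :
    @Continuous _ _ τ _ (fun f : ∀ i, A i => f i) := by
  classical
  let := τ
  refine continuous_of_continuousAt_zero (Pi.evalAddMonoidHom A i) ?_
  refine hbasis.tendsto_left_iff.2 fun t ht => ?_
  obtain ⟨W, hW, hWt⟩ := hlin i t (by simpa using ht)
  refine ⟨Function.update (fun j => ⊤) i W, fun j => ?_, fun f hf => hWt ?_⟩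
  · rcases eq_or_ne j i with rfl | hj
    · simpa using hW
    · simp [Function.update_of_ne hj]
  · simpa using hf i

theorem t2Space [∀ i, T2Space (A i)] (hbasis : HasBoxNhdsBasis τ)
    (hlin : ∀ i, HasLinearTopology (A i)) (hgrp : @IsTopologicalAddGroup (∀ i, A i) τ _) :
    @T2Space _ τ := by
  let := τ
  refine ⟨fun f g hfg => ?_⟩
  obtain ⟨i, hi⟩ := Function.ne_iff.1 hfg
  exact separated_by_continuous (hbasis.continuous_apply hlin hgrp i) hi

theorem completeSpace (hbasis : HasBoxNhdsBasis τ) (hlin : ∀ i, HasLinearTopology (A i))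
    (hgrp : @IsTopologicalAddGroup (∀ i, A i) τ _) (hcomplete : ∀ i, IsCompleteTAG (A i)) :
    @CompleteSpace (∀ i, A i) (@IsTopologicalAddGroup.rightUniformSpace _ _ τ hgrp) := by
  let := τ
  let := IsTopologicalAddGroup.rightUniformSpace (∀ i, A i)
  let := fun i => IsTopologicalAddGroup.rightUniformSpace (A i)
  have := isUniformAddGroup_of_addCommGroup (G := ∀ i, A i)
  have := fun i => isUniformAddGroup_of_addCommGroup (G := A i)
  have : ∀ i, CompleteSpace (A i) := hcomplete
  refine ⟨fun {F} hF => ?_⟩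
  have hFi (i : I) : Cauchy (map (fun f : ∀ i, A i => f i) F) :=
    hF.map (uniformContinuous_addMonoidHom_of_continuous (f := Pi.evalAddMonoidHom A i)
      (hbasis.continuous_apply hlin hgrp i))
  choose x hx using fun i => CompleteSpace.complete (hFi i)
  refine ⟨x, tendsto_sub_nhds_zero_iff.1 (hbasis.tendsto_right_iff.2 fun U hU => ?_)⟩
  obtain ⟨S, hSF, hS⟩ := (hbasis.uniformity_of_nhds_zero.cauchy_iff.1 hF).2 U hU
  have := hF.1
  filter_upwards [hSF] with g hg i
  have hlim : Tendsto (fun f : ∀ i, A i => g i - f i) F (𝓝 (g i - x i)) :=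
    tendsto_const_nhds.sub (hx i)
  exact AddSubgroup.isClosed_of_isOpen _ (hU i) |>.mem_of_tendsto hlim <|
    mem_of_superset hSF fun f hf => hS f hf g hg i

end HasBoxNhdsBasis

/-- Let `(A i)_{i ∈ I}` be a family of topological abelian groups with linear
topology and equip the product `∏_{i ∈ I} A i` with the box topology `τ`, i.e. the group topology
in which the subgroups `∏ᵢ Uᵢ`, with each `Uᵢ ⊆ A i` an open subgroup, form a basis of
neighborhoods of `0`.
(a) If every `A i` is separated then so is the product.
(b) If every `A i` is complete then so is the product. -/
theorem statement3 {I : Type*} {A : I → Type*} [∀ i, AddCommGroup (A i)]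
    [∀ i, TopologicalSpace (A i)] [∀ i, IsTopologicalAddGroup (A i)]
    (hlin : ∀ i, HasLinearTopology (A i))
    (τ : TopologicalSpace (∀ i, A i))
    (hgrp : @IsTopologicalAddGroup (∀ i, A i) τ _)
    (hbasis : (@nhds _ τ 0).HasBasis
      (fun U : ∀ i, AddSubgroup (A i) => ∀ i, IsOpen (U i : Set (A i)))
      (fun U => {f : ∀ i, A i | ∀ i, f i ∈ U i})) :
    ((∀ i, T2Space (A i)) → @T2Space (∀ i, A i) τ) ∧
    ((∀ i, IsCompleteTAG (A i)) →
      @CompleteSpace (∀ i, A i) (@IsTopologicalAddGroup.rightUniformSpace _ _ τ hgrp)) :=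
  ⟨fun _ => HasBoxNhdsBasis.t2Space hbasis hlin hgrp,
    HasBoxNhdsBasis.completeSpace hbasis hlin hgrp⟩
end

section
/- For any family (A_i)_{i∈I} of topological abelian groups with linear topology, the product ∏_{i∈I} A_i equipped with the modified box topology is separated and complete. -/
open Filter Topology

/-! In the modified box topology each coordinate kernel `{f | f i = 0}` is a neighbourhood of `0`,
so a Cauchy filter is eventually constant in every coordinate; it converges to the point made of
these constants, because every basic neighbourhood of `0` is a box `∏ W i`, and a box condition on
`f - x` can be checked one coordinate at a time against a nearby `g` with `g i = x i`. -/

open Set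

theorem Cauchy.exists_mem_forall_sub_mem {G : Type*} [AddGroup G] [UniformSpace G]
    [IsUniformAddGroup G] {F : Filter G} (hF : Cauchy F) {V : Set G} (hV : V ∈ 𝓝 0) :
    ∃ t ∈ F, ∀ x ∈ t, ∀ y ∈ t, y - x ∈ V :=
  ((𝓝 (0 : G)).basis_sets.uniformity_of_nhds_zero.cauchy_iff.1 hF).2 V hV

namespace Pi

variable {I : Type*} {A : I → Type*} [∀ i, AddCommGroup (A i)]

theorem setOf_eval_eq_zero_and_mem_eq_pi [DecidableEq I] (J : Finset I)
    (U : ∀ i, AddSubgroup (A i)) :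
    {f : ∀ i, A i | (∀ j ∈ J, f j = 0) ∧ ∀ i ∉ J, f i ∈ U i} =
      univ.pi fun i ↦ if i ∈ J then {0} else (U i : Set (A i)) := by
  ext f
  simp only [mem_ofPred_eq, mem_univ_pi]
  refine ⟨fun ⟨hJ, hU⟩ i ↦ ?_, fun h ↦ ⟨fun j hj ↦ by simpa [hj] using h j,
    fun i hi ↦ by simpa [hi] using h i⟩⟩
  split_ifs with hi
  exacts [hJ i hi, hU i hi]

theorem t2Space_of_forall_eval_eq_zero_mem_nhds [TopologicalSpace (∀ i, A i)]
    [IsTopologicalAddGroup (∀ i, A i)] (hker : ∀ i, {f : ∀ i, A i | f i = 0} ∈ 𝓝 0) :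
    T2Space (∀ i, A i) :=
  IsTopologicalAddGroup.t2Space_of_zero_sep fun _ hx ↦
    let ⟨i, hi⟩ := Function.ne_iff.1 hx
    ⟨_, hker i, hi⟩

variable [UniformSpace (∀ i, A i)] [IsUniformAddGroup (∀ i, A i)] {F : Filter (∀ i, A i)}

theorem _root_.Cauchy.exists_eventually_eval_eq (hF : Cauchy F)
    (hker : ∀ i, {f : ∀ i, A i | f i = 0} ∈ 𝓝 0) (i : I) : ∃ a, ∀ᶠ f in F, f i = a := by
  obtain ⟨t, htF, ht⟩ := hF.exists_mem_forall_sub_mem (hker i)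
  obtain ⟨f₀, hf₀⟩ := hF.1.nonempty_of_mem htF
  exact ⟨f₀ i, mem_of_superset htF fun f hf ↦ sub_eq_zero.1 (ht f₀ hf₀ f hf)⟩

theorem _root_.Cauchy.le_nhds_of_eventually_eval_eq (hF : Cauchy F)
    (hbox : ∀ V ∈ 𝓝 (0 : ∀ i, A i), ∃ W : ∀ i, Set (A i), univ.pi W ∈ 𝓝 0 ∧ univ.pi W ⊆ V)
    {x : ∀ i, A i} (hx : ∀ i, ∀ᶠ f in F, f i = x i) : F ≤ 𝓝 x := by
  rw [← nhds_translation_sub, ← map_le_iff_le_comap]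
  intro V hV
  obtain ⟨W, hW, hWV⟩ := hbox V hV
  obtain ⟨t, htF, ht⟩ := hF.exists_mem_forall_sub_mem hW
  refine mem_map.2 <| mem_of_superset htF fun f hf ↦ hWV fun i _ ↦ ?_
  obtain ⟨g, hgt, hgi : g i = x i⟩ := hF.1.nonempty_of_mem (inter_mem htF (hx i))
  show f i - x i ∈ W i
  rw [← hgi]
  exact ht g hgt f hf i (mem_univ i)

theorem completeSpace_of_box_basis (hker : ∀ i, {f : ∀ i, A i | f i = 0} ∈ 𝓝 0)
    (hbox : ∀ V ∈ 𝓝 (0 : ∀ i, A i), ∃ W : ∀ i, Set (A i), univ.pi W ∈ 𝓝 0 ∧ univ.pi W ⊆ V) :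
    CompleteSpace (∀ i, A i) where
  complete hF := by
    choose a ha using hF.exists_eventually_eval_eq hker
    exact ⟨a, hF.le_nhds_of_eventually_eval_eq hbox ha⟩

end Pi

theorem statement4_general {I : Type*} {A : I → Type*} [∀ i, AddCommGroup (A i)]
    [∀ i, TopologicalSpace (A i)]
    (τ : TopologicalSpace (∀ i, A i))
    (hgrp : @IsTopologicalAddGroup (∀ i, A i) τ _)
    (hbasis : (@nhds _ τ 0).HasBasis
      (fun JU : Finset I × (∀ i, AddSubgroup (A i)) => ∀ i, IsOpen (JU.2 i : Set (A i)))
      (fun JU => {f : ∀ i, A i | (∀ j ∈ JU.1, f j = 0) ∧ ∀ i ∉ JU.1, f i ∈ JU.2 i})) :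
    @T2Space (∀ i, A i) τ ∧
    @CompleteSpace (∀ i, A i) (@IsTopologicalAddGroup.rightUniformSpace _ _ τ hgrp) := by
  classical
  let := IsTopologicalAddGroup.rightUniformSpace (∀ i, A i)
  have := isUniformAddGroup_of_addCommGroup (G := ∀ i, A i)
  have hker (i : I) : {f : ∀ i, A i | f i = 0} ∈ 𝓝 0 :=
    mem_of_superset (hbasis.mem_of_mem (i := ({i}, fun _ ↦ ⊤)) fun _ ↦ isOpen_univ)
      fun _ hf ↦ hf.1 i (Finset.mem_singleton_self i)
  have hbox : ∀ V ∈ 𝓝 (0 : ∀ i, A i),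
      ∃ W : ∀ i, Set (A i), univ.pi W ∈ 𝓝 0 ∧ univ.pi W ⊆ V := by
    intro V hV
    obtain ⟨⟨J, U⟩, hU, hUV⟩ := hbasis.mem_iff.1 hV
    rw [Pi.setOf_eval_eq_zero_and_mem_eq_pi] at hUV
    exact ⟨_, Pi.setOf_eval_eq_zero_and_mem_eq_pi J U ▸ hbasis.mem_of_mem hU, hUV⟩
  exact ⟨Pi.t2Space_of_forall_eval_eq_zero_mem_nhds hker, Pi.completeSpace_of_box_basis hker hbox⟩

/-- For any family `(A i)_{i ∈ I}` of topological abelian groups with linear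
topology, the product `∏_{i ∈ I} A i` equipped with the modified box topology — the group
topology in which the subgroups `∏_{j ∈ J} {0} × ∏_{l ∉ J} U l`, for `J ⊆ I` finite and each
`U l ⊆ A l` an open subgroup, form a basis of neighborhoods of `0` — is separated and complete. -/
theorem statement4 {I : Type*} {A : I → Type*} [∀ i, AddCommGroup (A i)]
    [∀ i, TopologicalSpace (A i)] [∀ i, IsTopologicalAddGroup (A i)]
    (hlin : ∀ i, HasLinearTopology (A i))
    (τ : TopologicalSpace (∀ i, A i))
    (hgrp : @IsTopologicalAddGroup (∀ i, A i) τ _)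
    (hbasis : (@nhds _ τ 0).HasBasis
      (fun JU : Finset I × (∀ i, AddSubgroup (A i)) => ∀ i, IsOpen (JU.2 i : Set (A i)))
      (fun JU => {f : ∀ i, A i | (∀ j ∈ JU.1, f j = 0) ∧ ∀ i ∉ JU.1, f i ∈ JU.2 i})) :
    @T2Space (∀ i, A i) τ ∧
    @CompleteSpace (∀ i, A i) (@IsTopologicalAddGroup.rightUniformSpace _ _ τ hgrp) :=
  statement4_general τ hgrp hbasis
end

section
/- Let (A_i)_{i∈I} be a family of separated topological abelian groups with linear topology. Then the direct sum ⊕_{i∈I} A_i equipped with the modified coproduct topology is separated and complete. -/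
open Filter Topology

/-!
Since `{f | f i = 0}` is a neighbourhood of zero, every coordinate map is locally constant. This
separates points, and it makes each coordinate of a Cauchy filter eventually constant, say equal
to `a i`. Separation and linearity of the `A i` force `a` to be finitely supported, and the
Cauchy filter then converges to `a`.
-/

theorem Cauchy.exists_eventually_sub_mem {G : Type*} [AddGroup G] [UniformSpace G]
    [IsUniformAddGroup G] {F : Filter G} (hF : Cauchy F) {s : Set G} (hs : s ∈ 𝓝 0) :
    ∃ x, ∀ᶠ f in F, f - x ∈ s := by
  obtain ⟨hne, hlim⟩ := (IsUniformAddGroup.cauchy_iff_tendsto F).1 hF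
  obtain ⟨t, htF, hts⟩ := mem_prod_self_iff.1 (hlim hs)
  obtain ⟨x, hx⟩ := hne.nonempty_of_mem htF
  exact ⟨x, mem_of_superset htF fun f hf => hts (Set.mk_mem_prod hf hx)⟩

theorem HasLinearTopology.exists_isOpen_addSubgroup_mem_imp_eq_zero {A : Type*} [AddCommGroup A]
    [TopologicalSpace A] [T1Space A] (hlin : HasLinearTopology A) (x : A) :
    ∃ V : AddSubgroup A, IsOpen (V : Set A) ∧ (x ∈ V → x = 0) := by
  by_cases hx : x = 0
  · exact ⟨⊤, isOpen_univ, fun _ => hx⟩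
  · obtain ⟨V, hVopen, hV⟩ := hlin {x}ᶜ (isOpen_compl_singleton.mem_nhds (Ne.symm hx))
    exact ⟨V, hVopen, fun hxV => absurd rfl (hV hxV)⟩

theorem DFinsupp.exists_coe_eq_of_support_subset {I : Type*} {A : I → Type*}
    [∀ i, AddCommGroup (A i)] (f : Π₀ i, A i) (a : ∀ i, A i) (h : ∀ i, f i = 0 → a i = 0) :
    ∃ b : Π₀ i, A i, ⇑b = a := by
  classical
  refine ⟨DFinsupp.mk f.support fun i => a i, funext fun i => ?_⟩
  by_cases hi : i ∈ f.support
  · simp [DFinsupp.mk_apply, hi]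
  · simp [DFinsupp.mk_apply, hi, h i (DFinsupp.notMem_support_iff.1 hi)]

namespace ModifiedCoproduct

variable {I : Type*} {A : I → Type*} [∀ i, AddCommGroup (A i)]

def basicSubgroup (J : Finset I) (U : ∀ i, AddSubgroup (A i)) : AddSubgroup (Π₀ i, A i) where
  carrier := {f | (∀ j ∈ J, f j = 0) ∧ ∀ i ∉ J, f i ∈ U i}
  zero_mem' := ⟨fun _ _ => rfl, fun i _ => (U i).zero_mem⟩
  add_mem' := fun hf hg =>
    ⟨fun j hj => by simp [hf.1 j hj, hg.1 j hj], fun i hi => (U i).add_mem (hf.2 i hi) (hg.2 i hi)⟩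
  neg_mem' := fun hf => ⟨fun j hj => by simp [hf.1 j hj], fun i hi => (U i).neg_mem (hf.2 i hi)⟩

theorem mem_basicSubgroup_of_forall_exists {J : Finset I} {U : ∀ i, AddSubgroup (A i)}
    {f : Π₀ i, A i} (h : ∀ i, ∃ g ∈ basicSubgroup J U, g i = f i) : f ∈ basicSubgroup J U := by
  constructor
  · intro j hj
    obtain ⟨g, hg, hgf⟩ := h j
    exact hgf ▸ hg.1 j hj
  · intro i hi
    obtain ⟨g, hg, hgf⟩ := h i
    exact hgf ▸ hg.2 i hi

variable (A) in
def HasBasicNhds [∀ i, TopologicalSpace (A i)] [TopologicalSpace (Π₀ i, A i)] : Prop :=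
  (𝓝 (0 : Π₀ i, A i)).HasBasis
    (fun JU : Finset I × (∀ i, AddSubgroup (A i)) => ∀ i, IsOpen (JU.2 i : Set (A i)))
    fun JU => basicSubgroup JU.1 JU.2

variable [∀ i, TopologicalSpace (A i)]

section Topological

variable [TopologicalSpace (Π₀ i, A i)]

theorem setOf_apply_eq_zero_mem_nhds (hbasis : HasBasicNhds A) (i : I) :
    {f : Π₀ i, A i | f i = 0} ∈ 𝓝 0 :=
  mem_of_superset (hbasis.mem_of_mem (i := ({i}, fun _ => ⊤)) fun _ => isOpen_univ)
    fun _ hf => hf.1 i (Finset.mem_singleton_self i)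

theorem t2Space [IsTopologicalAddGroup (Π₀ i, A i)] (hbasis : HasBasicNhds A) :
    T2Space (Π₀ i, A i) := by
  refine IsTopologicalAddGroup.t2Space_of_zero_sep fun f hf => ?_
  obtain ⟨i, hi⟩ : ∃ i, f i ≠ 0 := by
    by_contra! h
    exact hf (DFinsupp.ext h)
  exact ⟨_, setOf_apply_eq_zero_mem_nhds hbasis i, hi⟩

end Topological

section Uniform

variable [UniformSpace (Π₀ i, A i)] [IsUniformAddGroup (Π₀ i, A i)] {F : Filter (Π₀ i, A i)}

theorem exists_eventually_apply_eq (hbasis : HasBasicNhds A) (hF : Cauchy F) (i : I) :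
    ∃ c : A i, ∀ᶠ f in F, f i = c := by
  obtain ⟨x, hx⟩ := hF.exists_eventually_sub_mem (setOf_apply_eq_zero_mem_nhds hbasis i)
  exact ⟨x i, hx.mono fun f hf => sub_eq_zero.1 hf⟩

/-- Choose open subgroups `V i` missing the nonzero `a i`; the filter is eventually in one coset
of `basicSubgroup ∅ V`, and a representative `f₀` of it vanishes only where `a` does. -/
theorem exists_dfinsupp_of_eventually_apply_eq (hbasis : HasBasicNhds A)
    (hlin : ∀ i, HasLinearTopology (A i)) [∀ i, T1Space (A i)] (hF : Cauchy F) {a : ∀ i, A i}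
    (ha : ∀ i, ∀ᶠ f in F, f i = a i) : ∃ b : Π₀ i, A i, ⇑b = a := by
  have := hF.1
  choose V hVopen hV using fun i => (hlin i).exists_isOpen_addSubgroup_mem_imp_eq_zero (a i)
  obtain ⟨f₀, hf₀⟩ := hF.exists_eventually_sub_mem (hbasis.mem_of_mem (i := (∅, V)) hVopen)
  refine DFinsupp.exists_coe_eq_of_support_subset f₀ a fun i hi => hV i ?_
  obtain ⟨f, hfa, hff₀⟩ := ((ha i).and hf₀).exists
  simpa [hfa, hi] using hff₀.2 i (Finset.notMem_empty i)

/-- Membership in a basic subgroup is tested coordinate by coordinate, so `b - x` lies in it as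
soon as each of its coordinates is attained by some `f - x` lying in it. -/
theorem le_nhds_of_eventually_apply_eq (hbasis : HasBasicNhds A) (hF : Cauchy F)
    {b : Π₀ i, A i} (hb : ∀ i, ∀ᶠ f in F, f i = b i) : F ≤ 𝓝 b := by
  have := hF.1
  refine tendsto_sub_nhds_zero_iff.1 (hbasis.tendsto_right_iff.2 fun JU hJU => ?_)
  obtain ⟨x, hx⟩ := hF.exists_eventually_sub_mem (hbasis.mem_of_mem hJU)
  have hbx : b - x ∈ basicSubgroup JU.1 JU.2 := mem_basicSubgroup_of_forall_exists fun i => by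
    obtain ⟨f, hfx, hfb⟩ := (hx.and (hb i)).exists
    exact ⟨f - x, hfx, by simp [hfb]⟩
  filter_upwards [hx] with f hfx
  simpa using (basicSubgroup JU.1 JU.2).sub_mem hfx hbx

theorem completeSpace (hbasis : HasBasicNhds A) (hlin : ∀ i, HasLinearTopology (A i))
    [∀ i, T1Space (A i)] : CompleteSpace (Π₀ i, A i) where
  complete {F} hF := by
    choose a ha using exists_eventually_apply_eq hbasis hF
    obtain ⟨b, rfl⟩ := exists_dfinsupp_of_eventually_apply_eq hbasis hlin hF ha
    exact ⟨b, le_nhds_of_eventually_apply_eq hbasis hF ha⟩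

end Uniform

end ModifiedCoproduct

theorem statement6_general {I : Type*} {A : I → Type*} [∀ i, AddCommGroup (A i)]
    [∀ i, TopologicalSpace (A i)]
    (hlin : ∀ i, HasLinearTopology (A i)) (hsep : ∀ i, T2Space (A i))
    (τ : TopologicalSpace (Π₀ i, A i))
    (hgrp : @IsTopologicalAddGroup (Π₀ i, A i) τ _)
    (hbasis : (@nhds _ τ 0).HasBasis
      (fun JU : Finset I × (∀ i, AddSubgroup (A i)) => ∀ i, IsOpen (JU.2 i : Set (A i)))
      (fun JU => {f : Π₀ i, A i | (∀ j ∈ JU.1, f j = 0) ∧ ∀ i ∉ JU.1, f i ∈ JU.2 i})) :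
    @T2Space (Π₀ i, A i) τ ∧
    @CompleteSpace (Π₀ i, A i) (@IsTopologicalAddGroup.rightUniformSpace _ _ τ hgrp) := by
  let : TopologicalSpace (Π₀ i, A i) := τ
  let : UniformSpace (Π₀ i, A i) := IsTopologicalAddGroup.rightUniformSpace _
  have : IsUniformAddGroup (Π₀ i, A i) := isUniformAddGroup_of_addCommGroup
  exact ⟨ModifiedCoproduct.t2Space hbasis, ModifiedCoproduct.completeSpace hbasis hlin⟩

/-- Let `(A i)_{i ∈ I}` be a family of separated topological abelian groups with
linear topology.  Then the direct sum `⊕_{i ∈ I} A i` (formalized as `Π₀ i, A i`) equipped with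
the modified coproduct topology — the group topology in which the subgroups
`⊕_{j ∈ J} {0} ⊕ ⊕_{l ∉ J} U l`, for `J ⊆ I` finite and each `U l ⊆ A l` an open subgroup, form
a basis of neighborhoods of `0` — is separated and complete. -/
theorem statement6 {I : Type*} {A : I → Type*} [∀ i, AddCommGroup (A i)]
    [∀ i, TopologicalSpace (A i)] [∀ i, IsTopologicalAddGroup (A i)]
    (hlin : ∀ i, HasLinearTopology (A i)) (hsep : ∀ i, T2Space (A i))
    (τ : TopologicalSpace (Π₀ i, A i))
    (hgrp : @IsTopologicalAddGroup (Π₀ i, A i) τ _)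
    (hbasis : (@nhds _ τ 0).HasBasis
      (fun JU : Finset I × (∀ i, AddSubgroup (A i)) => ∀ i, IsOpen (JU.2 i : Set (A i)))
      (fun JU => {f : Π₀ i, A i | (∀ j ∈ JU.1, f j = 0) ∧ ∀ i ∉ JU.1, f i ∈ JU.2 i})) :
    @T2Space (Π₀ i, A i) τ ∧
    @CompleteSpace (Π₀ i, A i) (@IsTopologicalAddGroup.rightUniformSpace _ _ τ hgrp) :=
  statement6_general hlin hsep τ hgrp hbasis
end

section
/- Let Q be a separated topological abelian group with linear topology and let I be an infinite set. Equip A = ⊕_{i∈I} Q (the group of finitely supported I-indexed families in Q) with the modified coproduct topology, and let Σ : A → Q be the summation homomorphism sending a finitely supported family (q_i)_{i∈I} to Σ_{i∈I} q_i. Then A is a complete, separated topological abelian group, and Σ is a surjective, continuous, open group homomorphism. Consequently, Q with its given topology is the quotient of the complete, separated group A by the closed subgroup ker(Σ), with the quotient topology. -/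
open Filter Topology

theorem HasLinearTopology.exists_isOpen_addSubgroup_eq_zero_of_mem {A : Type*} [AddCommGroup A]
    [TopologicalSpace A] [T2Space A] (hA : HasLinearTopology A) (x : A) :
    ∃ W : AddSubgroup A, IsOpen (W : Set A) ∧ (x ∈ W → x = 0) := by
  by_cases hx : x = 0
  · exact ⟨⊤, by simp, fun _ => hx⟩
  · obtain ⟨W, hWo, hWx⟩ := hA {x}ᶜ (compl_singleton_mem_nhds (Ne.symm hx))
    exact ⟨W, hWo, fun hxW => absurd rfl (hWx hxW)⟩

section ModifiedCoproduct

variable {I : Type*} {G : I → Type*} [∀ i, AddCommGroup (G i)]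

/-- The subgroup `⊕_{j ∈ J} {0} ⊕ ⊕_{l ∉ J} U l` of the direct sum. -/
def coprodNhd (J : Finset I) (U : ∀ i, AddSubgroup (G i)) : Set (Π₀ i, G i) :=
  {f | (∀ j ∈ J, f j = 0) ∧ ∀ i ∉ J, f i ∈ U i}

variable (G) in
def IsModifiedCoproductTopology [∀ i, TopologicalSpace (G i)] [TopologicalSpace (Π₀ i, G i)] :
    Prop :=
  (𝓝 (0 : Π₀ i, G i)).HasBasis
    (fun JU : Finset I × (∀ i, AddSubgroup (G i)) => ∀ i, IsOpen (JU.2 i : Set (G i)))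
    fun JU => coprodNhd JU.1 JU.2

namespace IsModifiedCoproductTopology

variable [∀ i, TopologicalSpace (G i)] [TopologicalSpace (Π₀ i, G i)]
  (h : IsModifiedCoproductTopology G)
include h

theorem coprodNhd_mem_nhds {J : Finset I} {U : ∀ i, AddSubgroup (G i)}
    (hU : ∀ i, IsOpen (U i : Set (G i))) : coprodNhd J U ∈ 𝓝 0 :=
  h.mem_of_mem (i := (J, U)) hU

variable [IsTopologicalAddGroup (Π₀ i, G i)]

theorem t2Space : T2Space (Π₀ i, G i) := by
  refine IsTopologicalAddGroup.t2Space_of_zero_sep fun f hf => ?_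
  obtain ⟨j, hj⟩ := DFunLike.ne_iff.mp hf
  exact ⟨_, h.coprodNhd_mem_nhds (J := {j}) (U := fun _ => ⊤) (by simp),
    fun hmem => hj (hmem.1 j (by simp))⟩

section Completeness

attribute [local instance] IsTopologicalAddGroup.rightUniformSpace

section CauchyFilter

variable {F : Filter (Π₀ i, G i)} (hF : Cauchy F)
include hF

theorem exists_mem_sub_mem_coprodNhd (J : Finset I) {U : ∀ i, AddSubgroup (G i)}
    (hU : ∀ i, IsOpen (U i : Set (G i))) : ∃ B ∈ F, ∀ f ∈ B, ∀ g ∈ B, g - f ∈ coprodNhd J U := by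
  have hmem := hF.2 (preimage_mem_comap (h.coprodNhd_mem_nhds (J := J) hU))
  obtain ⟨B, hB, hBB⟩ := mem_prod_self_iff.mp hmem
  exact ⟨B, hB, fun f hf g hg => by simpa [sub_eq_add_neg] using hBB (Set.mk_mem_prod hf hg)⟩

theorem exists_eventually_apply_eq (j : I) : ∃ q : G j, ∀ᶠ f in F, f j = q := by
  obtain ⟨B, hB, hBB⟩ := h.exists_mem_sub_mem_coprodNhd hF {j} (U := fun _ => ⊤) (by simp)
  obtain ⟨f, hf⟩ := hF.1.nonempty_of_mem hB
  refine ⟨f j, mem_of_superset hB fun g hg => ?_⟩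
  simpa [sub_eq_zero] using (hBB f hf g hg).1 j (by simp)

theorem exists_eventually_sub_mem {U : ∀ i, AddSubgroup (G i)}
    (hU : ∀ i, IsOpen (U i : Set (G i))) : ∃ g : Π₀ i, G i, ∀ᶠ f in F, ∀ i, f i - g i ∈ U i := by
  obtain ⟨B, hB, hBB⟩ := h.exists_mem_sub_mem_coprodNhd hF ∅ hU
  obtain ⟨g, hg⟩ := hF.1.nonempty_of_mem hB
  exact ⟨g, mem_of_superset hB fun f hf i => (hBB g hg f hf).2 i (by simp)⟩

theorem exists_coe_eq_of_eventually_apply_eq [∀ i, T2Space (G i)]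
    (hG : ∀ i, HasLinearTopology (G i)) {q : ∀ i, G i} (hq : ∀ j, ∀ᶠ f in F, f j = q j) :
    ∃ f₀ : Π₀ i, G i, ⇑f₀ = q := by
  classical
  choose W hWo hW using fun i => (hG i).exists_isOpen_addSubgroup_eq_zero_of_mem (q i)
  obtain ⟨g, hg⟩ := h.exists_eventually_sub_mem hF hWo
  have hq_zero : ∀ i ∉ g.support, q i = 0 := fun i hi => by
    have := hF.1
    obtain ⟨f, hfq, hfg⟩ := ((hq i).and hg).exists
    have hqW : q i ∈ W i := by simpa [DFinsupp.notMem_support_iff.mp hi, hfq] using hfg i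
    exact hW i hqW
  refine ⟨DFinsupp.mk g.support fun i => q i, funext fun i => ?_⟩
  rw [DFinsupp.mk_apply]
  split_ifs with hi
  · rfl
  · exact (hq_zero i hi).symm

theorem le_nhds_of_eventually_apply_eq {f₀ : Π₀ i, G i} (hq : ∀ j, ∀ᶠ f in F, f j = f₀ j) :
    F ≤ 𝓝 f₀ := by
  classical
  rw [← nhds_translation_sub f₀]
  refine (h.comap _).ge_iff.mpr fun ⟨J, U⟩ hU => ?_
  obtain ⟨g, hg⟩ := h.exists_eventually_sub_mem hF hU
  have hT := (eventually_all_finset (J ∪ (g.support ∪ f₀.support))).mpr fun j _ => hq j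
  filter_upwards [hg, hT] with f hfg hfT
  refine ⟨fun j hj => by simp [hfT j (by simp [hj])], fun i _ => ?_⟩
  by_cases hi : i ∈ g.support ∪ f₀.support
  · simp [hfT i (Finset.mem_union_right _ hi)]
  · simp only [Finset.mem_union, DFinsupp.mem_support_toFun, not_or, not_not] at hi
    simpa [hi.1, hi.2] using hfg i

end CauchyFilter

theorem isCompleteTAG [∀ i, T2Space (G i)] (hG : ∀ i, HasLinearTopology (G i)) :
    IsCompleteTAG (Π₀ i, G i) := by
  refine ⟨fun {F} hF => ?_⟩
  choose q hq using fun j => h.exists_eventually_apply_eq hF j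
  obtain ⟨f₀, rfl⟩ := h.exists_coe_eq_of_eventually_apply_eq hF hG hq
  exact ⟨f₀, h.le_nhds_of_eventually_apply_eq hF hq⟩

end Completeness

variable [DecidableEq I] {Q : Type*} [AddCommGroup Q] [TopologicalSpace Q] [IsTopologicalAddGroup Q]
  {φ : ∀ i, G i →+ Q}

theorem continuous_sumAddHom (hQ : HasLinearTopology Q) (hφ : ∀ i, Continuous (φ i)) :
    Continuous (DFinsupp.sumAddHom φ) := by
  refine continuous_of_continuousAt_zero _ fun s hs => ?_
  rw [map_zero] at hs
  obtain ⟨V, hVo, hVs⟩ := hQ s hs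
  have hN := h.coprodNhd_mem_nhds (J := ∅) (U := fun i => V.comap (φ i))
    fun i => hVo.preimage (hφ i)
  refine mem_map.mpr <| mem_of_superset hN fun f hf => hVs ?_
  exact dfinsuppSumAddHom_mem V f φ fun i _ => hf.2 i (by simp)

theorem isOpenMap_sumAddHom [Infinite I] (hφ : ∀ i, IsOpenMap (φ i)) : IsOpenMap (DFinsupp.sumAddHom φ) := by
  refine IsTopologicalAddGroup.isOpenMap_iff_nhds_zero.mpr <| (h.map _).ge_iff.mpr fun ⟨J, U⟩ hU => ?_
  obtain ⟨i₀, hi₀⟩ := Infinite.exists_notMem_finset J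
  have himage := (hφ i₀).image_mem_nhds ((hU i₀).mem_nhds (zero_mem _))
  rw [map_zero] at himage
  refine mem_of_superset himage ?_
  rintro _ ⟨x, hx, rfl⟩
  refine ⟨DFinsupp.single i₀ x, ⟨fun j hj => ?_, fun i _ => ?_⟩, by simp⟩
  · exact DFinsupp.single_eq_of_ne (fun hij => hi₀ (hij ▸ hj))
  · by_cases hi : i₀ = i
    · subst hi; simpa using hx
    · simp [DFinsupp.single_eq_of_ne (Ne.symm hi), zero_mem]

end IsModifiedCoproductTopology

end ModifiedCoproduct

/-- Let `Q` be a separated topological abelian group with linear topology and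
`I` an infinite set.  Equip the direct sum `A = ⊕_{i ∈ I} Q` (formalized as `Π₀ _ : I, Q`) with
the modified coproduct topology `τ` — the group topology whose basic neighborhoods of `0` are
the subgroups `⊕_{j ∈ J} {0} ⊕ ⊕_{l ∉ J} U l`, for `J ⊆ I` finite and `U l ⊆ Q` open subgroups —
and let `Σ : A → Q` be the summation homomorphism.  Then `A` is complete and separated, and `Σ`
is a surjective, continuous, open group homomorphism; consequently `Q` with its given topology is
the topological quotient of the complete separated group `A` by the closed subgroup `ker Σ`. -/
theorem statement7 {I : Type*} [Infinite I] [DecidableEq I] {Q : Type*} [AddCommGroup Q]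
    [TopologicalSpace Q] [IsTopologicalAddGroup Q] [T2Space Q]
    (hQ : HasLinearTopology Q)
    (τ : TopologicalSpace (Π₀ _ : I, Q))
    (hgrp : @IsTopologicalAddGroup (Π₀ _ : I, Q) τ _)
    (hbasis : (@nhds _ τ 0).HasBasis
      (fun JU : Finset I × (I → AddSubgroup Q) => ∀ i, IsOpen (JU.2 i : Set Q))
      (fun JU => {f : Π₀ _ : I, Q | (∀ j ∈ JU.1, f j = 0) ∧ ∀ i ∉ JU.1, f i ∈ JU.2 i}))
    (S : (Π₀ _ : I, Q) →+ Q)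
    (hS : S = DFinsupp.sumAddHom fun _ : I => AddMonoidHom.id Q) :
    (@T2Space (Π₀ _ : I, Q) τ ∧
      @CompleteSpace (Π₀ _ : I, Q) (@IsTopologicalAddGroup.rightUniformSpace _ _ τ hgrp)) ∧
    (Function.Surjective S ∧ @Continuous _ _ τ _ S ∧ @IsOpenMap _ _ τ _ S) ∧
    @IsClosed (Π₀ _ : I, Q) τ {f | S f = 0} := by
  let := τ
  have h : IsModifiedCoproductTopology (fun _ : I => Q) := hbasis
  have hcont : Continuous S := hS ▸ h.continuous_sumAddHom hQ fun _ => continuous_id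
  refine ⟨⟨h.t2Space, h.isCompleteTAG fun _ => hQ⟩,
    ⟨fun x => ⟨DFinsupp.single (Classical.arbitrary I) x, by simp [hS]⟩, hcont,
      hS ▸ h.isOpenMap_sumAddHom fun _ => IsOpenMap.id⟩,
    isClosed_singleton.preimage hcont⟩
end

section
/- Let k be a field with the discrete topology and let V be a complete, separated topological k-vector space with linear topology. Then V has a countable basis of neighborhoods of 0 if and only if there exists a sequence (V_n)_{n∈ℕ} of k-vector spaces, each equipped with the discrete topology, and an isomorphism of topological vector spaces (a k-linear homeomorphism) between V and the product ∏_{n∈ℕ} V_n equipped with the product topology. -/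
open Filter Topology

/-- A topological `k`-vector space has *linear topology* if the open `k`-subspaces form a basis
of neighborhoods of zero. -/
def HasLinearTopologyMod (k V : Type*) [Semiring k] [AddCommMonoid V] [Module k V]
    [TopologicalSpace V] : Prop :=
  ∀ s ∈ nhds (0 : V), ∃ U : Submodule k V, IsOpen (U : Set V) ∧ (U : Set V) ⊆ s

universe u v

/-!
Choose an antitone sequence of open subspaces `U n` with `U 0 = ⊤` forming a basis at `0`.
Composing projections onto the successive `U n` gives projections `E n : V → U n` with
`E n ∘ E m = E (max m n)`, so the differences `E n - E (n + 1)` are orthogonal idempotents whose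
images `W n` complement `U (n + 1)` in `U n`. The map `v ↦ ((E n - E (n + 1)) v)ₙ` into `∏ W n`
is continuous since its `n`-th coordinate vanishes on `U (n + 1)`, injective since `V` is
separated, and surjective since in a complete nonarchimedean group every sequence tending to `0`
is summable. Its inverse is continuous because `w i = 0` for `i < m` forces the preimage of `w`
into `U m`. Conversely, a countable product of discrete spaces is first countable.
-/

theorem LinearMap.exists_isProj {k V : Type*} [DivisionRing k] [AddCommGroup V] [Module k V]
    (p : Submodule k V) : ∃ f : V →ₗ[k] V, LinearMap.IsProj p f := by
  obtain ⟨q, hq⟩ := p.exists_isCompl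
  exact ⟨p.projection q hq,
    ⟨Submodule.projection_apply_mem hq, fun _ => Submodule.projection_apply_of_mem_left hq⟩⟩

theorem NonarchimedeanAddGroup.of_hasBasis {G ι : Type*} [AddGroup G] [TopologicalSpace G]
    [IsTopologicalAddGroup G] {p : ι → Prop} {H : ι → AddSubgroup G}
    (h : (𝓝 (0 : G)).HasBasis p fun i => (H i : Set G)) : NonarchimedeanAddGroup G where
  is_nonarchimedean s hs := by
    obtain ⟨i, hi, hsub⟩ := h.mem_iff.1 hs
    exact ⟨⟨H i, (H i).isOpen_of_mem_nhds (h.mem_of_mem hi)⟩, hsub⟩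

theorem IsCompleteTAG.summable_of_tendsto_cofinite_zero {G ι : Type*} [AddCommGroup G]
    [TopologicalSpace G] [NonarchimedeanAddGroup G] (hcomp : IsCompleteTAG G) {f : ι → G}
    (hf : Tendsto f cofinite (𝓝 0)) : Summable f := by
  let := IsTopologicalAddGroup.rightUniformSpace G
  have := isUniformAddGroup_of_addCommGroup (G := G)
  have : CompleteSpace G := hcomp
  exact NonarchimedeanAddGroup.summable_of_tendsto_cofinite_zero hf

theorem HasLinearTopologyMod.exists_antitone_basis {k V : Type*} [Semiring k] [AddCommMonoid V]
    [Module k V] [TopologicalSpace V] (hlin : HasLinearTopologyMod k V)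
    [(𝓝 (0 : V)).IsCountablyGenerated] :
    ∃ U : ℕ → Submodule k V, U 0 = ⊤ ∧ Antitone U ∧
      (𝓝 (0 : V)).HasBasis (fun _ => True) fun n => (U n : Set V) := by
  obtain ⟨s, hs⟩ := (𝓝 (0 : V)).exists_antitone_basis
  choose W hWopen hWs using fun n => hlin (s n) (hs.mem n)
  refine ⟨fun n => ⨅ m ∈ Finset.range n, W m, by simp, fun m n h => ?_,
    hs.toHasBasis.to_hasBasis' (fun n _ => ⟨n + 1, trivial, ?_⟩) fun n _ => ?_⟩
  · exact iInf₂_mono' fun i hi => ⟨i, Finset.range_mono h hi, le_rfl⟩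
  · exact (SetLike.coe_subset_coe.2
      (iInf₂_le (f := fun m _ => W m) n (Finset.self_mem_range_succ n))).trans (hWs n)
  · simp only [Submodule.coe_iInf]
    exact (biInter_finset_mem _).2 fun m _ => (hWopen m).mem_nhds (W m).zero_mem

namespace Submodule

section Filtration

variable {k V : Type*} [DivisionRing k] [AddCommGroup V] [Module k V] (U : ℕ → Submodule k V)

noncomputable def filtrationProj : ℕ → V →ₗ[k] V
  | 0 => LinearMap.id
  | n + 1 => (LinearMap.exists_isProj (U (n + 1))).choose ∘ₗ filtrationProj n

noncomputable def gradedProj (n : ℕ) : V →ₗ[k] V :=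
  filtrationProj U n - filtrationProj U (n + 1)

noncomputable abbrev gradedPiece (n : ℕ) : Submodule k V :=
  LinearMap.range (gradedProj U n)

noncomputable def gradedDecomposition : V →ₗ[k] ∀ n, gradedPiece U n :=
  LinearMap.pi fun n => (gradedProj U n).rangeRestrict

variable {U}

theorem isProj_filtrationProj (hU0 : U 0 = ⊤) (hU : Antitone U) :
    ∀ n, LinearMap.IsProj (U n) (filtrationProj U n)
  | 0 => hU0 ▸ LinearMap.IsProj.top _ _
  | n + 1 => by
    have hF := (LinearMap.exists_isProj (U (n + 1))).choose_spec
    refine ⟨fun x => hF.map_mem _, fun x hx => ?_⟩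
    simp only [filtrationProj, LinearMap.comp_apply,
      (isProj_filtrationProj hU0 hU n).map_id x (hU n.le_succ hx), hF.map_id x hx]

theorem filtrationProj_apply_of_le (hU0 : U 0 = ⊤) (hU : Antitone U) {m n : ℕ} (h : m ≤ n)
    (x : V) : filtrationProj U n (filtrationProj U m x) = filtrationProj U n x := by
  induction n, h using Nat.le_induction with
  | base =>
    exact (isProj_filtrationProj hU0 hU m).map_id _ ((isProj_filtrationProj hU0 hU m).map_mem x)
  | succ n _ ih => simp only [filtrationProj, LinearMap.comp_apply, ih]

theorem filtrationProj_apply_of_ge (hU0 : U 0 = ⊤) (hU : Antitone U) {m n : ℕ} (h : n ≤ m)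
    (x : V) : filtrationProj U n (filtrationProj U m x) = filtrationProj U m x :=
  (isProj_filtrationProj hU0 hU n).map_id _ (hU h ((isProj_filtrationProj hU0 hU m).map_mem x))

theorem filtrationProj_apply_filtrationProj (hU0 : U 0 = ⊤) (hU : Antitone U) (m n : ℕ)
    (x : V) : filtrationProj U n (filtrationProj U m x) = filtrationProj U (max m n) x := by
  rcases le_total m n with h | h
  · rw [max_eq_right h, filtrationProj_apply_of_le hU0 hU h]
  · rw [max_eq_left h, filtrationProj_apply_of_ge hU0 hU h]

theorem gradedProj_apply_gradedProj (hU0 : U 0 = ⊤) (hU : Antitone U) (m n : ℕ) (x : V) :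
    gradedProj U n (gradedProj U m x) = if m = n then gradedProj U m x else 0 := by
  simp only [gradedProj, LinearMap.sub_apply, map_sub, filtrationProj_apply_filtrationProj hU0 hU]
  rcases lt_trichotomy m n with h | rfl | h
  · rw [if_neg h.ne, max_eq_right h.le, max_eq_right (Nat.succ_le_of_lt h),
      max_eq_right (by omega : m ≤ n + 1), max_eq_right (by omega : m + 1 ≤ n + 1)]
    abel
  · simp
  · rw [if_neg h.ne', max_eq_left h.le, max_eq_left (Nat.succ_le_of_lt h),
      max_eq_left (by omega : n ≤ m + 1), max_eq_left (by omega : n + 1 ≤ m + 1)]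
    abel

theorem gradedProj_mem (hU0 : U 0 = ⊤) (hU : Antitone U) (n : ℕ) (x : V) :
    gradedProj U n x ∈ U n :=
  sub_mem ((isProj_filtrationProj hU0 hU n).map_mem x)
    (hU n.le_succ ((isProj_filtrationProj hU0 hU (n + 1)).map_mem x))

theorem gradedProj_eq_zero_of_mem (hU0 : U 0 = ⊤) (hU : Antitone U) {n : ℕ} {x : V}
    (hx : x ∈ U (n + 1)) : gradedProj U n x = 0 := by
  rw [gradedProj, LinearMap.sub_apply, (isProj_filtrationProj hU0 hU n).map_id x (hU n.le_succ hx),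
    (isProj_filtrationProj hU0 hU (n + 1)).map_id x hx, sub_self]

theorem sum_gradedProj (n : ℕ) (x : V) :
    ∑ i ∈ Finset.range n, gradedProj U i x = x - filtrationProj U n x := by
  simp only [gradedProj, LinearMap.sub_apply]
  rw [Finset.sum_range_sub']
  rfl

theorem mem_of_gradedProj_eq_zero (hU0 : U 0 = ⊤) (hU : Antitone U) {n : ℕ} {x : V}
    (hx : ∀ i < n, gradedProj U i x = 0) : x ∈ U n := by
  have : x = filtrationProj U n x := by
    rw [← sub_eq_zero, ← sum_gradedProj]
    exact Finset.sum_eq_zero fun i hi => hx i (Finset.mem_range.1 hi)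
  exact this ▸ (isProj_filtrationProj hU0 hU n).map_mem x

theorem gradedPiece_le (hU0 : U 0 = ⊤) (hU : Antitone U) (n : ℕ) : gradedPiece U n ≤ U n :=
  LinearMap.range_le_iff_comap.2 <| eq_top_iff.2 fun x _ => gradedProj_mem hU0 hU n x

theorem gradedDecomposition_apply_coe (x : V) (n : ℕ) :
    (gradedDecomposition U x n : V) = gradedProj U n x :=
  rfl

theorem gradedDecomposition_gradedPiece (hU0 : U 0 = ⊤) (hU : Antitone U) {m : ℕ}
    (y : gradedPiece U m) : gradedDecomposition U y = Pi.single m y := by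
  obtain ⟨y, x, rfl⟩ := y
  funext n
  apply Subtype.ext
  rw [gradedDecomposition_apply_coe, gradedProj_apply_gradedProj hU0 hU]
  by_cases h : m = n
  · subst h; simp
  · simp [h]

theorem gradedDecomposition_injective (hU0 : U 0 = ⊤) (hU : Antitone U) (hsep : ⨅ n, U n = ⊥) :
    Function.Injective (gradedDecomposition U) := by
  refine (injective_iff_map_eq_zero _).2 fun x hx => ?_
  have hcoord (i : ℕ) : gradedProj U i x = 0 := by
    rw [← gradedDecomposition_apply_coe, hx]; rfl
  rw [← mem_bot k, ← hsep, mem_iInf]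
  exact fun n => mem_of_gradedProj_eq_zero hU0 hU fun i _ => hcoord i

end Filtration

section Topology

variable {k V : Type*} [DivisionRing k] [AddCommGroup V] [Module k V] [TopologicalSpace V]
  {U : ℕ → Submodule k V}

theorem iInf_eq_bot_of_hasBasis_nhds_zero [T1Space V]
    (hbasis : (𝓝 (0 : V)).HasBasis (fun _ => True) fun n => (U n : Set V)) : ⨅ n, U n = ⊥ := by
  refine eq_bot_iff.2 fun x hx => (mem_bot k).2 (by_contra fun hx0 => ?_)
  obtain ⟨n, -, hn⟩ := hbasis.mem_iff.1 (compl_singleton_mem_nhds (Ne.symm hx0))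
  exact hn ((mem_iInf U).1 hx n) rfl

variable [IsTopologicalAddGroup V]

theorem continuous_gradedDecomposition [∀ n, TopologicalSpace (gradedPiece U n)]
    [∀ n, DiscreteTopology (gradedPiece U n)] (hU0 : U 0 = ⊤) (hU : Antitone U)
    (hnhds : ∀ n, (U n : Set V) ∈ 𝓝 0) : Continuous (gradedDecomposition U) := by
  refine continuous_pi fun n => continuous_of_continuousAt_zero (gradedProj U n).rangeRestrict ?_
  rw [ContinuousAt, map_zero, nhds_discrete (gradedPiece U n), tendsto_pure]
  filter_upwards [hnhds (n + 1)] with x hx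
  exact Subtype.ext (gradedProj_eq_zero_of_mem hU0 hU hx)

theorem gradedDecomposition_surjective (hcomp : IsCompleteTAG V) (hU0 : U 0 = ⊤)
    (hU : Antitone U) (hbasis : (𝓝 (0 : V)).HasBasis (fun _ => True) fun n => (U n : Set V)) :
    Function.Surjective (gradedDecomposition U) := by
  intro c
  have : NonarchimedeanAddGroup V := .of_hasBasis (H := fun n => (U n).toAddSubgroup) hbasis
  have hc : Tendsto (fun m => (c m : V)) cofinite (𝓝 0) := by
    rw [Nat.cofinite_eq_atTop, hbasis.tendsto_right_iff]
    exact fun n _ => eventually_atTop.2 ⟨n, fun m hm => hU hm (gradedPiece_le hU0 hU m (c m).2)⟩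
  let _ : ∀ n, TopologicalSpace (gradedPiece U n) := fun _ => ⊥
  have _ : ∀ n, DiscreteTopology (gradedPiece U n) := fun _ => ⟨rfl⟩
  have hsum := (hcomp.summable_of_tendsto_cofinite_zero hc).hasSum.map (gradedDecomposition U)
    (continuous_gradedDecomposition hU0 hU fun n => hbasis.mem_of_mem trivial)
  refine ⟨_, hsum.unique (Pi.hasSum.2 fun n => ?_)⟩
  simp only [Function.comp_def, gradedDecomposition_gradedPiece hU0 hU]
  simpa using hasSum_single (f := fun m => Pi.single m (c m) n) n fun m hm => by simp [hm]

theorem exists_continuousLinearEquiv_pi_gradedPiece [T1Space V]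
    [∀ n, TopologicalSpace (gradedPiece U n)] [∀ n, DiscreteTopology (gradedPiece U n)]
    (hcomp : IsCompleteTAG V) (hU0 : U 0 = ⊤) (hU : Antitone U)
    (hbasis : (𝓝 (0 : V)).HasBasis (fun _ => True) fun n => (U n : Set V)) :
    Nonempty (V ≃L[k] ∀ n, gradedPiece U n) := by
  let e := LinearEquiv.ofBijective (gradedDecomposition U)
    ⟨gradedDecomposition_injective hU0 hU (iInf_eq_bot_of_hasBasis_nhds_zero hbasis),
      gradedDecomposition_surjective hcomp hU0 hU hbasis⟩
  refine ⟨{ e with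
    continuous_toFun :=
      continuous_gradedDecomposition hU0 hU fun n => hbasis.mem_of_mem trivial
    continuous_invFun := continuous_of_continuousAt_zero e.symm ?_ }⟩
  rw [ContinuousAt, map_zero, hbasis.tendsto_right_iff]
  intro m _
  filter_upwards [set_pi_mem_nhds (Set.finite_Iio m) fun i _ =>
    (isOpen_discrete {(0 : gradedPiece U i)}).mem_nhds rfl] with c hc
  refine mem_of_gradedProj_eq_zero hU0 hU fun i hi => ?_
  rw [← gradedDecomposition_apply_coe, show gradedDecomposition U (e.symm c) = c from
    e.apply_symm_apply c, hc i hi, ZeroMemClass.coe_zero]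

end Topology

end Submodule

theorem statement8_general {k : Type v} {V : Type u} [Field k]
    [AddCommGroup V] [Module k V] [TopologicalSpace V] [IsTopologicalAddGroup V]
    (hlin : HasLinearTopologyMod k V) [T2Space V] (hcomp : IsCompleteTAG V) :
    (nhds (0 : V)).IsCountablyGenerated ↔
      ∃ (W : ℕ → Type u) (iA : ∀ n, AddCommGroup (W n)),
        letI := iA
        ∃ iM : ∀ n, Module k (W n),
          letI := iM
          letI : ∀ n, TopologicalSpace (W n) := fun _ => ⊥
          Nonempty (V ≃L[k] ∀ n, W n) := by
  constructor
  · intro _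
    obtain ⟨U, hU0, hU, hbasis⟩ := hlin.exists_antitone_basis
    let _ : ∀ n, TopologicalSpace (Submodule.gradedPiece U n) := fun _ => ⊥
    have _ : ∀ n, DiscreteTopology (Submodule.gradedPiece U n) := fun _ => ⟨rfl⟩
    exact ⟨_, _, _, Submodule.exists_continuousLinearEquiv_pi_gradedPiece hcomp hU0 hU hbasis⟩
  · rintro ⟨W, _, _, ⟨e⟩⟩
    let _ : ∀ n, TopologicalSpace (W n) := fun _ => ⊥
    have _ : ∀ n, DiscreteTopology (W n) := fun _ => ⟨rfl⟩
    have := e.toHomeomorph.isInducing.firstCountableTopology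
    infer_instance

/-- Let `k` be a field with the discrete topology and let `V` be a complete,
separated topological `k`-vector space with linear topology.  Then `V` has a countable basis of
neighborhoods of `0` if and only if there is a sequence `(W n)_{n ∈ ℕ}` of `k`-vector spaces,
each equipped with the discrete topology, and a `k`-linear homeomorphism between `V` and the
product `∏ n, W n` with the product topology. -/
theorem statement8 {k : Type v} {V : Type u} [Field k] [TopologicalSpace k] [DiscreteTopology k]
    [AddCommGroup V] [Module k V] [TopologicalSpace V] [IsTopologicalAddGroup V]
    [ContinuousSMul k V]
    (hlin : HasLinearTopologyMod k V) [T2Space V] (hcomp : IsCompleteTAG V) :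
    (nhds (0 : V)).IsCountablyGenerated ↔
      ∃ (W : ℕ → Type u) (iA : ∀ n, AddCommGroup (W n)),
        letI := iA
        ∃ iM : ∀ n, Module k (W n),
          letI := iM
          letI : ∀ n, TopologicalSpace (W n) := fun _ => ⊥
          Nonempty (V ≃L[k] ∀ n, W n) :=
  statement8_general hlin hcomp
end

section
/- Let k be a field with the discrete topology, let V be a topological k-vector space with linear topology, and let U ⊆ V be a k-subspace equipped with the subspace topology. Let W be a complete, separated topological k-vector space with linear topology having a countable basis of neighborhoods of 0. Then every continuous k-linear map f : U → W extends to a continuous k-linear map g : V → W, i.e., g restricted to U equals f. -/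
open Filter Topology

theorem Submodule.sub_mem_of_antitone {R M : Type*} [Ring R] [AddCommGroup M] [Module R M]
    {S : ℕ → Submodule R M} (hS : Antitone S) {x : ℕ → M} (hx : ∀ n, x (n + 1) - x n ∈ S n)
    {N n : ℕ} (hNn : N ≤ n) : x n - x N ∈ S N := by
  induction n, hNn using Nat.le_induction with
  | base => simp
  | succ n hNn ih =>
    rw [← sub_add_sub_cancel]
    exact add_mem (hS hNn (hx n)) ih

section LinearAlgebra

variable {K V W : Type*} [DivisionRing K] [AddCommGroup V] [Module K V]
  [AddCommGroup W] [Module K W]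

theorem Submodule.exists_linearMap_eq_zero_and_sub_mem (U V' : Submodule K V) :
    ∃ π : V →ₗ[K] V', (∀ u ∈ U, π u = 0) ∧ ∀ v ∈ V', v - π v ∈ U := by
  let ι : V' →ₗ[K] V ⧸ U := U.mkQ ∘ₗ V'.subtype
  obtain ⟨s, hs⟩ := ι.rangeRestrict.exists_rightInverse_of_surjective ι.range_rangeRestrict
  obtain ⟨σ, hσ⟩ := LinearMap.exists_extend s
  refine ⟨σ ∘ₗ U.mkQ, fun u hu => by simp [(Submodule.Quotient.mk_eq_zero U).2 hu], ?_⟩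
  intro v hv
  have hσv : σ (U.mkQ v) = s ⟨U.mkQ v, ⟨v, hv⟩, rfl⟩ :=
    LinearMap.congr_fun hσ ⟨U.mkQ v, ⟨v, hv⟩, rfl⟩
  have hιs : ι (s ⟨U.mkQ v, ⟨v, hv⟩, rfl⟩) = U.mkQ v :=
    congrArg Subtype.val (LinearMap.congr_fun hs _)
  rw [LinearMap.comp_apply, hσv]
  exact (Submodule.Quotient.eq U).1 hιs.symm

theorem LinearMap.exists_extension_mapsTo {U V' : Submodule K V} {W' : Submodule K W}
    {f : U →ₗ[K] W} (hf : ∀ u : U, (u : V) ∈ V' → f u ∈ W') {g : V →ₗ[K] W}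
    (hg : ∀ u : U, g u = f u) :
    ∃ g' : V →ₗ[K] W, (∀ u : U, g' u = f u) ∧ (∀ v ∈ V', g' v ∈ W') ∧
      ∀ v, g' v - g v ∈ V'.map g := by
  obtain ⟨π, hπU, hπV'⟩ := U.exists_linearMap_eq_zero_and_sub_mem V'
  refine ⟨g - g ∘ₗ V'.subtype ∘ₗ π, fun u => by simp [hπU u u.2, hg], fun v hv => ?_, fun v => ?_⟩
  · have hv' : v - π v ∈ V' := V'.sub_mem hv (π v).2
    simpa [← map_sub, ← hg ⟨_, hπV' v hv⟩] using hf ⟨_, hπV' v hv⟩ hv'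
  · simpa using Submodule.mem_map_of_mem (f := g) (V'.neg_mem (π v).2)

theorem LinearMap.exists_seq_extension {U : Submodule K V} (f : U →ₗ[K] W)
    {Vn : ℕ → Submodule K V} (hVn : Antitone Vn) (Wn : ℕ → Submodule K W)
    (hf : ∀ n (u : U), (u : V) ∈ Vn n → f u ∈ Wn n) :
    ∃ g : ℕ → V →ₗ[K] W, (∀ n (u : U), g n u = f u) ∧ (∀ n, ∀ v ∈ Vn n, g n v ∈ Wn n) ∧
      ∀ n v, g (n + 1) v - g n v ∈ Wn n := by
  have step (n : ℕ) (g : {e : V →ₗ[K] W // ∀ u : U, e u = f u}) :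
      ∃ g' : {e : V →ₗ[K] W // ∀ u : U, e u = f u},
        (∀ v ∈ Vn n, g'.1 v ∈ Wn n) ∧ ∀ v, g'.1 v - g.1 v ∈ (Vn n).map g.1 := by
    obtain ⟨g', hg'f, hg'V, hg'g⟩ := LinearMap.exists_extension_mapsTo (hf n) g.2
    exact ⟨⟨g', hg'f⟩, hg'V, hg'g⟩
  choose next hnextV hnextsub using step
  obtain ⟨g₀, hg₀⟩ := LinearMap.exists_extend f
  let g : ℕ → {e : V →ₗ[K] W // ∀ u : U, e u = f u} := fun n =>
    Nat.rec (next 0 ⟨g₀, fun u => LinearMap.congr_fun hg₀ u⟩) (fun m gm => next (m + 1) gm) n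
  have hgV : ∀ n, ∀ v ∈ Vn n, (g n).1 v ∈ Wn n := by
    rintro (_ | n) <;> exact hnextV _ _
  refine ⟨fun n => (g n).1, fun n => (g n).2, hgV, fun n v => ?_⟩
  obtain ⟨w, hw, hwv⟩ := hnextsub (n + 1) (g n) v
  exact hwv ▸ hgV n w (hVn n.le_succ hw)

end LinearAlgebra

section Limit

variable {K V W : Type*} [Ring K] [AddCommGroup V] [Module K V]
  [AddCommGroup W] [Module K W] [UniformSpace W] [IsUniformAddGroup W] [CompleteSpace W]
  [T2Space W] [ContinuousConstSMul K W]

theorem LinearMap.exists_tendsto_of_sub_mem {Wn : ℕ → Submodule K W}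
    (hWn : (𝓝 0).HasBasis (fun _ => True) fun n => (Wn n : Set W))
    (hclosed : ∀ n, IsClosed (Wn n : Set W)) (g : ℕ → V →ₗ[K] W)
    (hg : ∀ N n, N ≤ n → ∀ v, g n v - g N v ∈ Wn N) :
    ∃ G : V →ₗ[K] W, (∀ v, Tendsto (fun n => g n v) atTop (𝓝 (G v))) ∧
      ∀ N v, G v - g N v ∈ Wn N := by
  have hcauchy (v : V) : CauchySeq fun n => g n v := by
    refine hWn.uniformity_of_nhds_zero.cauchySeq_iff.2 fun N _ => ⟨N, fun m hm n hn => ?_⟩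
    simpa using sub_mem (hg N n hn v) (hg N m hm v)
  choose G hG using fun v => cauchySeq_tendsto_of_complete (hcauchy v)
  refine ⟨linearMapOfTendsto G g (tendsto_pi_nhds.2 hG), hG, fun N v => ?_⟩
  exact (hclosed N).mem_of_tendsto ((hG v).sub_const _)
    (eventually_atTop.2 ⟨N, fun n hn => hg N n hn v⟩)

end Limit

section LinearTopology

variable {R M : Type*} [Semiring R] [AddCommMonoid M] [Module R M] [TopologicalSpace M]

theorem HasLinearTopologyMod.hasBasis_submodule (hM : HasLinearTopologyMod R M) :
    (𝓝 (0 : M)).HasBasis (fun A : Submodule R M => IsOpen (A : Set M)) (↑) :=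
  ⟨fun s => ⟨hM s, fun ⟨A, hA, hAs⟩ => mem_of_superset (hA.mem_nhds A.zero_mem) hAs⟩⟩

theorem HasLinearTopologyMod.exists_antitone_basis_s9 (hM : HasLinearTopologyMod R M)
    [(𝓝 (0 : M)).IsCountablyGenerated] :
    ∃ A : ℕ → Submodule R M, Antitone A ∧ (∀ n, IsOpen (A n : Set M)) ∧
      (𝓝 0).HasBasis (fun _ => True) fun n => (A n : Set M) := by
  obtain ⟨A, hAopen, hA⟩ := hM.hasBasis_submodule.exists_antitone_subbasis
  exact ⟨A, fun _ _ h => SetLike.coe_subset_coe.1 (hA.antitone h), hAopen, hA.toHasBasis⟩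

theorem HasLinearTopologyMod.exists_isOpen_mapsTo {X : Type*} [TopologicalSpace X]
    (hM : HasLinearTopologyMod R M) (U : Submodule R M) {f : U → X} (hf : ContinuousAt f 0)
    {s : Set X} (hs : s ∈ 𝓝 (f 0)) :
    ∃ A : Submodule R M, IsOpen (A : Set M) ∧ ∀ u : U, (u : M) ∈ A → f u ∈ s := by
  have h : f ⁻¹' s ∈ 𝓝 (0 : U) := hf hs
  rw [nhds_subtype_eq_comap, Submodule.coe_zero] at h
  obtain ⟨t, ht, hts⟩ := mem_comap.1 h
  obtain ⟨A, hA, hAt⟩ := hM t ht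
  exact ⟨A, hA, fun u hu => hts (hAt hu)⟩

theorem Submodule.exists_antitone_isOpen_le {A : ℕ → Submodule R M}
    (hA : ∀ n, IsOpen (A n : Set M)) :
    ∃ B : ℕ → Submodule R M, Antitone B ∧ (∀ n, B n ≤ A n) ∧ ∀ n, IsOpen (B n : Set M) :=
  ⟨fun n => ⨅ i ≤ n, A i, fun _ _ h => biInf_mono fun _ hi => hi.trans h,
    fun n => iInf₂_le (f := fun i (_ : i ≤ n) => A i) n le_rfl,
    fun n => by simpa using (Set.finite_Iic n).isOpen_biInter fun i _ => hA i⟩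

end LinearTopology

theorem statement9_general {k V W : Type*} [Field k] [TopologicalSpace k]
    [AddCommGroup V] [Module k V] [TopologicalSpace V] [IsTopologicalAddGroup V]
    (hV : HasLinearTopologyMod k V)
    [AddCommGroup W] [Module k W] [TopologicalSpace W] [IsTopologicalAddGroup W]
    [ContinuousSMul k W] (hW : HasLinearTopologyMod k W)
    [T2Space W] (hWcomp : IsCompleteTAG W) (hWcount : (nhds (0 : W)).IsCountablyGenerated)
    (U : Submodule k V) (f : U →L[k] W) :
    ∃ g : V →L[k] W, ∀ u : U, g (u : V) = f u := by
  obtain ⟨Wn, hWanti, hWopen, hWn⟩ := hW.exists_antitone_basis_s9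
  choose A hAopen hAf using fun n =>
    hV.exists_isOpen_mapsTo U f.continuous.continuousAt (s := Wn n)
      (by simpa using (hWopen n).mem_nhds (Wn n).zero_mem)
  obtain ⟨Vn, hVanti, hVA, hVopen⟩ := Submodule.exists_antitone_isOpen_le hAopen
  obtain ⟨g, hgf, hgV, hgsucc⟩ := LinearMap.exists_seq_extension f.toLinearMap hVanti Wn
    fun n u hu => hAf n u (hVA n hu)
  let := IsTopologicalAddGroup.rightUniformSpace W
  have := isUniformAddGroup_of_addCommGroup (G := W)
  have : CompleteSpace W := hWcomp
  obtain ⟨G, hGlim, hGg⟩ := LinearMap.exists_tendsto_of_sub_mem hWn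
    (fun n => (Wn n).toAddSubgroup.isClosed_of_isOpen (hWopen n)) g
    fun N n h v => Submodule.sub_mem_of_antitone (x := (g · v)) hWanti (hgsucc · v) h
  have hGV (n : ℕ) : ∀ v ∈ Vn n, G v ∈ Wn n := fun v hv => by
    simpa using add_mem (hGg n v) (hgV n v hv)
  have hGcont : ContinuousAt G 0 := by
    rw [ContinuousAt, map_zero]
    exact hWn.tendsto_right_iff.2 fun n _ =>
      mem_of_superset ((hVopen n).mem_nhds (Vn n).zero_mem) (hGV n)
  refine ⟨⟨G, continuous_of_continuousAt_zero G hGcont⟩, fun u => ?_⟩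
  exact tendsto_nhds_unique (hGlim u) (by simp [hgf])

/-- Let `k` be a field with the discrete topology, `V` a topological `k`-vector
space with linear topology, `U ⊆ V` a subspace with the subspace topology, and `W` a complete,
separated topological `k`-vector space with linear topology having a countable basis of
neighborhoods of `0`.  Then every continuous `k`-linear map `f : U → W` extends to a continuous
`k`-linear map `g : V → W`. -/
theorem statement9 {k V W : Type*} [Field k] [TopologicalSpace k] [DiscreteTopology k]
    [AddCommGroup V] [Module k V] [TopologicalSpace V] [IsTopologicalAddGroup V]
    [ContinuousSMul k V] (hV : HasLinearTopologyMod k V)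
    [AddCommGroup W] [Module k W] [TopologicalSpace W] [IsTopologicalAddGroup W]
    [ContinuousSMul k W] (hW : HasLinearTopologyMod k W)
    [T2Space W] (hWcomp : IsCompleteTAG W) (hWcount : (nhds (0 : W)).IsCountablyGenerated)
    (U : Submodule k V) (f : U →L[k] W) :
    ∃ g : V →L[k] W, ∀ u : U, g (u : V) = f u :=
  statement9_general hV hW hWcomp hWcount U f
end

section
/- Let k be a field with the discrete topology, let V be a topological k-vector space with linear topology, and let U ⊆ V be a k-subspace which, equipped with the subspace topology, is complete, separated, and has a countable basis of neighborhoods of 0. Then there exists a topological k-vector space W with linear topology and an isomorphism of topological vector spaces (a k-linear homeomorphism) V ≅ U × W (product topology) under which the inclusion U → V corresponds to the map u ↦ (u, 0). Equivalently, there exists a continuous k-linear retraction r : V → U with r(u) = u for all u ∈ U. -/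
open Filter Topology

/-!
Fix open subspaces `W₀ ⊇ W₁ ⊇ ⋯` of `V` whose traces `U ∩ Wₙ` form a basis of neighbourhoods of
`0` in `U`. Over a field one finds linear maps `fₙ : V → U` killing `Wₙ` and congruent to the
identity on `U` modulo `U ∩ Wₙ`, and by extending from `U + Wₙ₊₁` one can moreover choose
`fₙ₊₁ ≡ fₙ` modulo `U ∩ Wₙ`. By completeness the `fₙ` converge pointwise; the limit `r` is linear,
maps `Wₙ` into `U ∩ Wₙ` (hence is continuous), and is the identity on `U` since `U` is separated.
-/

section Algebra

variable {k V : Type*} [DivisionRing k] [AddCommGroup V] [Module k V]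

def IsRetractionModulo (U W : Submodule k V) (f : V →ₗ[k] U) : Prop :=
  (∀ w ∈ W, f w = 0) ∧ ∀ u : U, f u - u ∈ W.comap U.subtype

theorem exists_isRetractionModulo (U W : Submodule k V) :
    ∃ f : V →ₗ[k] U, IsRetractionModulo U W f := by
  set K := W.comap U.subtype
  let α : (U ⧸ K) →ₗ[k] V ⧸ W := K.mapQ W U.subtype le_rfl
  have hα : LinearMap.ker α = ⊥ := by rw [Submodule.ker_mapQ, Submodule.mkQ_map_self]
  obtain ⟨β, hβ⟩ := α.exists_leftInverse_of_injective hα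
  obtain ⟨s, hs⟩ := K.mkQ.exists_rightInverse_of_surjective K.range_mkQ
  refine ⟨s ∘ₗ β ∘ₗ W.mkQ, fun w hw => ?_, fun u => ?_⟩
  · simp [(Submodule.Quotient.mk_eq_zero W).2 hw]
  · rw [← Submodule.Quotient.mk_eq_zero, Submodule.Quotient.mk_sub, sub_eq_zero]
    change K.mkQ (s (β (α (K.mkQ u)))) = K.mkQ u
    rw [← LinearMap.comp_apply β α, hβ, ← LinearMap.comp_apply K.mkQ s, hs]
    rfl

theorem LinearMap.exists_eqOn_sub_mem {M : Type*} [AddCommGroup M] [Module k M]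
    {S : Submodule k V} {N : Submodule k M} {f₀ g : V →ₗ[k] M} (h : ∀ x ∈ S, f₀ x - g x ∈ N) :
    ∃ f : V →ₗ[k] M, (∀ x ∈ S, f x = f₀ x) ∧ ∀ v, f v - g v ∈ N := by
  obtain ⟨ψ, hψ⟩ := (((f₀ - g).domRestrict S).codRestrict N fun x => h x x.2).exists_extend
  refine ⟨g + N.subtype ∘ₗ ψ, fun x hx => ?_, fun v => by simp⟩
  have hψx : ψ x = ⟨f₀ x - g x, h x hx⟩ := DFunLike.congr_fun hψ ⟨x, hx⟩
  simp [hψx]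

theorem IsRetractionModulo.exists_sub_mem {U W W' : Submodule k V} (hWW' : W ≤ W')
    {g : V →ₗ[k] U} (hg : IsRetractionModulo U W' g) :
    ∃ f : V →ₗ[k] U, IsRetractionModulo U W f ∧ ∀ v, f v - g v ∈ W'.comap U.subtype := by
  obtain ⟨f₀, hf₀W, hf₀U⟩ := exists_isRetractionModulo U W
  have hf₀g : ∀ x ∈ U ⊔ W, f₀ x - g x ∈ W'.comap U.subtype := by
    intro x hx
    obtain ⟨u, hu, w, hw, rfl⟩ := Submodule.mem_sup.1 hx
    have hsplit : f₀ (u + w) - g (u + w) =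
        (f₀ (⟨u, hu⟩ : U) - ⟨u, hu⟩) - (g (⟨u, hu⟩ : U) - ⟨u, hu⟩) := by
      rw [map_add, map_add, hf₀W w hw, hg.1 w (hWW' hw)]
      abel
    rw [hsplit]
    exact sub_mem (Submodule.comap_mono hWW' (hf₀U _)) (hg.2 _)
  obtain ⟨f, hff₀, hfg⟩ := LinearMap.exists_eqOn_sub_mem hf₀g
  refine ⟨f, ⟨fun w hw => ?_, fun u => ?_⟩, hfg⟩
  · rw [hff₀ w (Submodule.mem_sup_right hw), hf₀W w hw]
  · rw [hff₀ u (Submodule.mem_sup_left u.2)]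
    exact hf₀U u

theorem exists_seq_isRetractionModulo (U : Submodule k V) {W : ℕ → Submodule k V}
    (hW : Antitone W) :
    ∃ f : ℕ → V →ₗ[k] U, (∀ n, IsRetractionModulo U (W n) (f n)) ∧
      ∀ n v, f (n + 1) v - f n v ∈ (W n).comap U.subtype := by
  choose f₀ hf₀ using exists_isRetractionModulo U (W 0)
  choose next hnext using fun n (g : {g // IsRetractionModulo U (W n) g}) =>
    g.2.exists_sub_mem (hW n.le_succ)
  let F : ∀ n, {g // IsRetractionModulo U (W n) g} :=
    fun n => Nat.rec ⟨f₀, hf₀⟩ (fun n g => ⟨next n g, (hnext n g).1⟩) n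
  exact ⟨fun n => (F n).1, fun n => (F n).2, fun n => (hnext n (F n)).2⟩

end Algebra

theorem exists_antitone_isOpen_comap_hasAntitoneBasis {k V : Type*} [Semiring k]
    [AddCommMonoid V] [Module k V] [TopologicalSpace V] (hV : HasLinearTopologyMod k V)
    (U : Submodule k V) [(𝓝 (0 : U)).IsCountablyGenerated] :
    ∃ W : ℕ → Submodule k V, Antitone W ∧ (∀ n, IsOpen (W n : Set V)) ∧
      (𝓝 (0 : U)).HasAntitoneBasis fun n => ((W n).comap U.subtype : Set U) := by
  obtain ⟨s, hs⟩ := exists_antitone_basis (𝓝 (0 : U))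
  have hO : ∀ n, ∃ O : Submodule k V, IsOpen (O : Set V) ∧ U.subtype ⁻¹' O ⊆ s n := by
    intro n
    obtain ⟨t, ht, hts⟩ := (mem_nhds_subtype _ _ _).1 (hs.mem n)
    obtain ⟨O, hO, hOt⟩ := hV t ht
    exact ⟨O, hO, (Set.preimage_mono hOt).trans hts⟩
  choose O hOopen hOs using hO
  let W : ℕ → Submodule k V := fun n => ⨅ i ≤ n, O i
  have hanti : Antitone W := fun n m hnm => biInf_mono fun i hi => hi.trans hnm
  have hopen : ∀ n, IsOpen (W n : Set V) := fun n => by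
    simpa only [W, Submodule.coe_iInf, Set.mem_Iic] using
      (Set.finite_Iic n).isOpen_biInter fun i _ => hOopen i
  have hbasis : (𝓝 (0 : U)).HasBasis (fun _ => True) fun n => ((W n).comap U.subtype : Set U) := by
    refine hs.1.to_hasBasis' (fun n _ => ⟨n, trivial, ?_⟩) fun n _ =>
      ((hopen n).preimage continuous_subtype_val).mem_nhds (W n).zero_mem
    have hWO : W n ≤ O n := iInf₂_le (f := fun i (_ : i ≤ n) => O i) n le_rfl
    exact fun x hx => hOs n (hWO hx)
  exact ⟨W, hanti, hopen, hbasis, fun n m hnm => Submodule.comap_mono (hanti hnm)⟩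

theorem exists_tendsto_sub_mem {G : Type*} [AddCommGroup G] [UniformSpace G] [IsUniformAddGroup G]
    [CompleteSpace G] {N : ℕ → AddSubgroup G} (hN : (𝓝 (0 : G)).HasAntitoneBasis fun n => N n)
    {x : ℕ → G} (hx : ∀ n, x (n + 1) - x n ∈ N n) :
    ∃ y, Tendsto x atTop (𝓝 y) ∧ ∀ n, y - x n ∈ N n := by
  have hsub : ∀ n m, n ≤ m → x m - x n ∈ N n := by
    intro n m hnm
    induction m, hnm using Nat.le_induction with
    | base => simp
    | succ m hnm ih =>
      rw [← sub_add_sub_cancel]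
      exact add_mem (hN.antitone hnm (hx m)) ih
  have hcauchy : CauchySeq x := hN.1.uniformity_of_nhds_zero.cauchySeq_iff'.2 fun n _ =>
    ⟨n, fun m hm => by simpa using neg_mem (hsub n m hm)⟩
  obtain ⟨y, hy⟩ := cauchySeq_tendsto_of_complete hcauchy
  refine ⟨y, hy, fun n => ?_⟩
  have hclosed : IsClosed (N n : Set G) :=
    AddSubgroup.isClosed_of_isOpen _ (AddSubgroup.isOpen_of_mem_nhds _ (hN.1.mem_of_mem trivial))
  exact hclosed.mem_of_tendsto (hy.sub_const (x n)) (eventually_atTop.2 ⟨n, hsub n⟩)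

theorem exists_continuousLinearMap_tendsto {k V E : Type*} [Ring k] [AddCommGroup V] [Module k V]
    [TopologicalSpace V] [IsTopologicalAddGroup V] [AddCommGroup E] [Module k E] [UniformSpace E]
    [IsUniformAddGroup E] [CompleteSpace E] [T2Space E] [ContinuousConstSMul k E]
    {W : ℕ → Submodule k V} (hW : ∀ n, IsOpen (W n : Set V))
    {N : ℕ → Submodule k E} (hN : (𝓝 (0 : E)).HasAntitoneBasis fun n => N n)
    {f : ℕ → V →ₗ[k] E} (hfW : ∀ n, ∀ w ∈ W n, f n w = 0)
    (hf : ∀ n v, f (n + 1) v - f n v ∈ N n) :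
    ∃ r : V →L[k] E, ∀ v, Tendsto (fun n => f n v) atTop (𝓝 (r v)) := by
  choose r hr using fun v =>
    exists_tendsto_sub_mem (N := fun n => (N n).toAddSubgroup) (x := (f · v)) hN (hf · v)
  let rₗ := linearMapOfTendsto r f (tendsto_pi_nhds.2 fun v => (hr v).1)
  have hcont : Continuous rₗ := by
    refine continuous_of_tendsto_nhds_zero rₗ (hN.1.tendsto_right_iff.2 fun n _ => ?_)
    filter_upwards [(hW n).mem_nhds (W n).zero_mem] with w hw
    simpa [rₗ, hfW n w hw] using (hr w).2 n
  exact ⟨⟨rₗ, hcont⟩, fun v => (hr v).1⟩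

theorem statement10_general {k V : Type*} [Field k] [TopologicalSpace k]
    [AddCommGroup V] [Module k V] [TopologicalSpace V] [IsTopologicalAddGroup V]
    [ContinuousSMul k V] (hV : HasLinearTopologyMod k V)
    (U : Submodule k V) [T2Space U] (hUcomp : IsCompleteTAG U)
    (hUcount : (nhds (0 : U)).IsCountablyGenerated) :
    ∃ r : V →L[k] U, ∀ u : U, r (u : V) = u := by
  obtain ⟨W, hWanti, hWopen, hbasis⟩ := exists_antitone_isOpen_comap_hasAntitoneBasis hV U
  obtain ⟨f, hf, hfsucc⟩ := exists_seq_isRetractionModulo U hWanti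
  let := IsTopologicalAddGroup.rightUniformSpace U
  have := isUniformAddGroup_of_addCommGroup (G := U)
  have : CompleteSpace U := hUcomp
  obtain ⟨r, hr⟩ := exists_continuousLinearMap_tendsto hWopen hbasis (fun n => (hf n).1) hfsucc
  exact ⟨r, fun u => tendsto_nhds_unique (hr u)
    (tendsto_sub_nhds_zero_iff.1 (hbasis.tendsto fun n => (hf n).2 u))⟩

/-- Let `k` be a field with the discrete topology, `V` a topological
`k`-vector space with linear topology, and `U ⊆ V` a `k`-subspace which, with the subspace
topology, is complete, separated, and has a countable basis of neighborhoods of `0`.  Then `U`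
splits off topologically: equivalently (as stated), there is a continuous `k`-linear retraction
`r : V → U` with `r u = u` for all `u ∈ U`. -/
theorem statement10 {k V : Type*} [Field k] [TopologicalSpace k] [DiscreteTopology k]
    [AddCommGroup V] [Module k V] [TopologicalSpace V] [IsTopologicalAddGroup V]
    [ContinuousSMul k V] (hV : HasLinearTopologyMod k V)
    (U : Submodule k V) [T2Space U] (hUcomp : IsCompleteTAG U)
    (hUcount : (nhds (0 : U)).IsCountablyGenerated) :
    ∃ r : V →L[k] U, ∀ u : U, r (u : V) = u :=
  statement10_general hV U hUcomp hUcount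
end

section
/- Let C be a preadditive category with kernels, cokernels, and binary biproducts (so that all pushouts and pullbacks exist in C). Assume C is semi-abelian, i.e., for every morphism f the canonical coimage–image comparison coim(f) → im(f) is both a monomorphism and an epimorphism. Then the following are equivalent: (i) for every morphism i which is a kernel and every morphism g out of the domain of i, the pushout of i along g is a kernel (C is right quasi-abelian); (ii) for every morphism p which is a cokernel and every morphism h into the codomain of p, the pullback of p along h is a cokernel (C is left quasi-abelian). -/
open CategoryTheory CategoryTheory.Limits

universe v u

/-- A morphism `i` is *a kernel* if it is a kernel of some morphism of the category. -/
def IsKernelMor {C : Type u} [Category.{v} C] [HasZeroMorphisms C] {X Y : C} (i : X ⟶ Y) :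
    Prop :=
  ∃ (Z : C) (g : Y ⟶ Z) (w : i ≫ g = 0), Nonempty (IsLimit (KernelFork.ofι i w))

/-- A morphism `p` is *a cokernel* if it is a cokernel of some morphism of the category. -/
def IsCokernelMor {C : Type u} [Category.{v} C] [HasZeroMorphisms C] {X Y : C} (p : X ⟶ Y) :
    Prop :=
  ∃ (Z : C) (g : Z ⟶ X) (w : g ≫ p = 0), Nonempty (IsColimit (CokernelCofork.ofπ p w))

/-! For a cokernel `p : A ⟶ S` and any `h : B ⟶ S`, the pullback `P` sits in `B ⊞ A` as the kernel
`m` of `[h, -p]`. In a semi-abelian category every morphism is a cokernel followed by a mono; since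
`p = (-inr) ≫ [h, -p]` is a strong epimorphism, the mono part of `[h, -p]` is an isomorphism, so
`[h, -p]` is a cokernel, and this makes `pullback.fst : P ⟶ B` an epimorphism.

If `p` is the cokernel of `g : Z ⟶ A`, let `κ = (0, g) : Z ⟶ P` and let `u : coker κ ⟶ B` be
induced by `pullback.fst`. The pushout of the kernel `m` along `P ⟶ coker κ` is `B ⊞ S`, with
other leg `u ≫ (𝟙, h)`. If kernels are stable under pushout, this leg is a kernel, hence a strong
mono, and so is `u`; being also an epi, `u` is an isomorphism, so `pullback.fst` is the cokernel
of `κ`. The converse implication is the dual statement, and the opposite of a semi-abelian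
category is semi-abelian. -/

namespace CategoryTheory

section ZeroMorphisms

variable {C : Type u} [Category.{v} C] [HasZeroMorphisms C] {X Y : C}

lemma isKernelMor_iff_nonempty_normalMono (i : X ⟶ Y) :
    IsKernelMor i ↔ Nonempty (NormalMono i) :=
  ⟨fun ⟨Z, g, w, ⟨hi⟩⟩ => ⟨⟨Z, g, w, hi⟩⟩, fun ⟨hi⟩ => ⟨hi.Z, hi.g, hi.w, ⟨hi.isLimit⟩⟩⟩

lemma isCokernelMor_iff_nonempty_normalEpi (p : X ⟶ Y) :
    IsCokernelMor p ↔ Nonempty (NormalEpi p) :=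
  ⟨fun ⟨Z, g, w, ⟨hp⟩⟩ => ⟨⟨Z, g, w, hp⟩⟩, fun ⟨hp⟩ => ⟨hp.W, hp.g, hp.w, ⟨hp.isColimit⟩⟩⟩

lemma IsKernelMor.strongMono {i : X ⟶ Y} (hi : IsKernelMor i) : StrongMono i := by
  obtain ⟨_⟩ := (isKernelMor_iff_nonempty_normalMono i).1 hi
  infer_instance

lemma IsCokernelMor.strongEpi {p : X ⟶ Y} (hp : IsCokernelMor p) : StrongEpi p := by
  obtain ⟨_⟩ := (isCokernelMor_iff_nonempty_normalEpi p).1 hp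
  infer_instance

lemma isKernelMor_kernelι (f : X ⟶ Y) [HasKernel f] : IsKernelMor (kernel.ι f) :=
  ⟨Y, f, kernel.condition f, ⟨kernelIsKernel f⟩⟩

lemma isCokernelMor_cokernelπ (f : X ⟶ Y) [HasCokernel f] : IsCokernelMor (cokernel.π f) :=
  ⟨X, f, cokernel.condition f, ⟨cokernelIsCokernel f⟩⟩

lemma IsKernelMor.op {i : X ⟶ Y} (hi : IsKernelMor i) : IsCokernelMor i.op :=
  let ⟨Z, g, w, ⟨hl⟩⟩ := hi
  ⟨Opposite.op Z, g.op, _, ⟨KernelFork.IsLimit.ofιOp i w hl⟩⟩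

lemma IsCokernelMor.op {p : X ⟶ Y} (hp : IsCokernelMor p) : IsKernelMor p.op :=
  let ⟨Z, g, w, ⟨hc⟩⟩ := hp
  ⟨Opposite.op Z, g.op, _, ⟨CokernelCofork.IsColimit.ofπOp p w hc⟩⟩

lemma IsKernelMor.unop {X Y : Cᵒᵖ} {i : X ⟶ Y} (hi : IsKernelMor i) : IsCokernelMor i.unop :=
  let ⟨Z, g, w, ⟨hl⟩⟩ := hi
  ⟨Opposite.unop Z, g.unop, _, ⟨KernelFork.IsLimit.ofιUnop i w hl⟩⟩

lemma IsCokernelMor.unop {X Y : Cᵒᵖ} {p : X ⟶ Y} (hp : IsCokernelMor p) : IsKernelMor p.unop :=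
  let ⟨Z, g, w, ⟨hc⟩⟩ := hp
  ⟨Opposite.unop Z, g.unop, _, ⟨CokernelCofork.IsColimit.ofπUnop p w hc⟩⟩

instance hasCokernels_opposite [HasKernels C] : HasCokernels Cᵒᵖ :=
  ⟨fun f => HasColimit.mk
    ⟨_, KernelFork.IsLimit.ofιOp _ (kernel.condition f.unop) (kernelIsKernel f.unop)⟩⟩

lemma isPushout_of_isColimit_cokernelCofork {K P Q R : C} {κ : K ⟶ P} {q : P ⟶ Q} [Epi q]
    (hκq : κ ≫ q = 0) {m : P ⟶ X} {k : K ⟶ X} (hk : κ ≫ m = k) {π : X ⟶ R} {w : k ≫ π = 0}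
    (hπ : IsColimit (CokernelCofork.ofπ π w)) {b : Q ⟶ R} (comm : q ≫ b = m ≫ π) :
    IsPushout q m b π := by
  have hπ' (s : PushoutCocone q m) : k ≫ s.inr = 0 := by
    rw [← hk, Category.assoc, ← s.condition, ← Category.assoc, hκq, zero_comp]
  let d (s : PushoutCocone q m) : R ⟶ s.pt := (CokernelCofork.IsColimit.desc' hπ s.inr (hπ' s)).1
  have hd (s : PushoutCocone q m) : π ≫ d s = s.inr :=
    (CokernelCofork.IsColimit.desc' hπ s.inr (hπ' s)).2
  refine IsPushout.of_isColimit <| PushoutCocone.IsColimit.mk comm d (fun s => ?_) hd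
    (fun s n _ hn => Cofork.IsColimit.hom_ext hπ (hn.trans (hd s).symm))
  rw [← cancel_epi q, ← Category.assoc, comm, Category.assoc, hd, s.condition]

end ZeroMorphisms

namespace MorphismProperty

lemma epimorphisms_op (C : Type u) [Category.{v} C] :
    (epimorphisms C).op = monomorphisms Cᵒᵖ := by
  ext X Y f
  exact ⟨fun (_ : Epi f.unop) => (inferInstance : Mono f.unop.op),
    fun (_ : Mono f) => (inferInstance : Epi f.unop)⟩

section ZeroMorphisms

variable (C : Type u) [Category.{v} C] [HasZeroMorphisms C]

def normalMonomorphisms : MorphismProperty C := fun _ _ i => IsKernelMor i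

def normalEpimorphisms : MorphismProperty C := fun _ _ p => IsCokernelMor p

instance : (normalMonomorphisms C).RespectsIso :=
  RespectsIso.of_respects_arrow_iso _ fun f g e hf => by
    obtain ⟨hf⟩ := (isKernelMor_iff_nonempty_normalMono f.hom).1 hf
    exact (isKernelMor_iff_nonempty_normalMono g.hom).2 ⟨hf.ofArrowIso e⟩

instance : (normalEpimorphisms C).RespectsIso :=
  RespectsIso.of_respects_arrow_iso _ fun f g e hf => by
    obtain ⟨hf⟩ := (isCokernelMor_iff_nonempty_normalEpi f.hom).1 hf
    exact (isCokernelMor_iff_nonempty_normalEpi g.hom).2 ⟨hf.ofArrowIso e⟩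

lemma normalMonomorphisms_op : (normalMonomorphisms C).op = normalEpimorphisms Cᵒᵖ := by
  ext X Y f
  exact ⟨IsKernelMor.op, IsCokernelMor.unop⟩

lemma normalEpimorphisms_op : (normalEpimorphisms C).op = normalMonomorphisms Cᵒᵖ := by
  ext X Y f
  exact ⟨IsCokernelMor.op, IsKernelMor.unop⟩

lemma isStableUnderCobaseChange_normalMonomorphisms_iff [HasPushouts C] :
    (normalMonomorphisms C).IsStableUnderCobaseChange ↔
      ∀ (A' A B' : C) (i : A' ⟶ A) (g : A' ⟶ B'),
        IsKernelMor i → IsKernelMor (pushout.inr i g) :=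
  ⟨fun _ _ _ _ i g hi => pushout_inr (P := normalMonomorphisms C) i g hi,
    fun H => .mk' fun _ _ _ i g _ hi => H _ _ _ i g hi⟩

lemma isStableUnderBaseChange_normalEpimorphisms_iff [HasPullbacks C] :
    (normalEpimorphisms C).IsStableUnderBaseChange ↔
      ∀ (A A'' B'' : C) (p : A ⟶ A'') (h : B'' ⟶ A''),
        IsCokernelMor p → IsCokernelMor (pullback.fst h p) :=
  ⟨fun _ _ _ _ p h hp => pullback_fst (P := normalEpimorphisms C) h p hp,
    fun H => .mk' fun _ _ _ h p _ hp => H _ _ _ p h hp⟩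

variable {C}

lemma isCokernelMor_of_isCokernelMor_comp
    [HasFactorization (normalEpimorphisms C) (monomorphisms C)] {W X Y : C} {j : W ⟶ X}
    {f : X ⟶ Y} (hjf : IsCokernelMor (j ≫ f)) : IsCokernelMor f := by
  let φ := factorizationData (normalEpimorphisms C) (monomorphisms C) f
  have : Mono φ.p := φ.hp
  have : StrongEpi ((j ≫ φ.i) ≫ φ.p) := by simpa using hjf.strongEpi
  have : StrongEpi φ.p := strongEpi_of_strongEpi (j ≫ φ.i) φ.p
  have : IsIso φ.p := isIso_of_mono_of_strongEpi φ.p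
  rw [← φ.fac]
  exact RespectsIso.postcomp (normalEpimorphisms C) φ.p φ.i φ.hi

end ZeroMorphisms

end MorphismProperty

section Preadditive

open MorphismProperty

variable {C : Type u} [Category.{v} C] [Preadditive C] [HasBinaryBiproducts C]

lemma comp_biprod_desc_neg_eq_zero_iff {W A B S : C} (h : B ⟶ S) (p : A ⟶ S) (x : W ⟶ B ⊞ A) :
    x ≫ biprod.desc h (-p) = 0 ↔ (x ≫ biprod.fst) ≫ h = (x ≫ biprod.snd) ≫ p := by
  simp [biprod.desc_eq, add_neg_eq_zero]

lemma isKernelMor_biprod_lift_pullback {A B S : C} (h : B ⟶ S) (p : A ⟶ S) [HasPullback h p] :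
    IsKernelMor (biprod.lift (pullback.fst h p) (pullback.snd h p)) :=
  ⟨S, biprod.desc h (-p), (comp_biprod_desc_neg_eq_zero_iff h p _).2 (by simp [pullback.condition]),
    ⟨KernelFork.IsLimit.ofι _ _
      (fun x hx => pullback.lift _ _ ((comp_biprod_desc_neg_eq_zero_iff h p x).1 hx))
      (fun x hx => by ext <;> simp [pullback.lift_fst, pullback.lift_snd])
      (fun x hx n hn => by
        apply pullback.hom_ext <;> simp [← hn, pullback.lift_fst, pullback.lift_snd])⟩⟩

lemma epi_pullback_fst_of_isCokernelMor_biprod_desc {A B S : C} (h : B ⟶ S) (p : A ⟶ S)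
    [HasPullback h p] [Epi p] (hψ : IsCokernelMor (biprod.desc h (-p))) :
    Epi (pullback.fst h p) := by
  obtain ⟨W, γ, hγ, ⟨hψ⟩⟩ := hψ
  refine Preadditive.epi_of_cancel_zero _ fun t ht => ?_
  have hγt : γ ≫ biprod.fst ≫ t = 0 := by
    rw [← Category.assoc, ← pullback.lift_fst _ _ ((comp_biprod_desc_neg_eq_zero_iff h p γ).1 hγ),
      Category.assoc, ht, comp_zero]
  obtain ⟨s, hs⟩ := CokernelCofork.IsColimit.desc' hψ (biprod.fst ≫ t) hγt
  have hs0 : s = 0 := by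
    rw [← cancel_epi p, comp_zero, ← neg_eq_zero, ← Preadditive.neg_comp]
    simpa using congr(biprod.inr ≫ $hs)
  simpa [hs0] using congr(biprod.inl ≫ $hs).symm

noncomputable def isColimitCokernelCoforkBiprodMap (B : C) {Z A S : C} {g : Z ⟶ A} {p : A ⟶ S}
    {w : g ≫ p = 0} (hp : IsColimit (CokernelCofork.ofπ p w)) :
    IsColimit (CokernelCofork.ofπ (biprod.map (𝟙 B) p)
      (show (g ≫ biprod.inr) ≫ biprod.map (𝟙 B) p = 0 by simp [reassoc_of% w])) :=
  CokernelCofork.IsColimit.ofπ _ _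
    (fun t ht => biprod.desc (biprod.inl ≫ t)
      (CokernelCofork.IsColimit.desc' hp (biprod.inr ≫ t) (by simpa using ht)).1)
    (fun t ht => by
      ext
      · simp
      · simpa using (CokernelCofork.IsColimit.desc' hp (biprod.inr ≫ t) _).2)
    (fun t ht n hn => by
      ext
      · simp [← hn]
      · have hd : p ≫ (CokernelCofork.IsColimit.desc' hp (biprod.inr ≫ t) (by simpa using ht)).1 =
            biprod.inr ≫ t := (CokernelCofork.IsColimit.desc' hp _ _).2
        refine Cofork.IsColimit.hom_ext hp ?_
        simp [hd, ← hn])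

theorem MorphismProperty.isStableUnderBaseChange_normalEpimorphisms [HasCokernels C]
    [HasPullbacks C] [HasFactorization (normalEpimorphisms C) (monomorphisms C)]
    [(normalMonomorphisms C).IsStableUnderCobaseChange] :
    (normalEpimorphisms C).IsStableUnderBaseChange := by
  refine .mk' fun B A S h p _ (hp : IsCokernelMor p) => ?_
  have : Epi p := hp.strongEpi.epi
  have : Epi (pullback.fst h p) := epi_pullback_fst_of_isCokernelMor_biprod_desc h p
    (isCokernelMor_of_isCokernelMor_comp (j := -biprod.inr) (by simpa using hp))
  obtain ⟨Z, g, w, ⟨hp⟩⟩ := hp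
  let κ : Z ⟶ pullback h p := pullback.lift 0 g (by simp [w])
  let u : cokernel κ ⟶ B := cokernel.desc κ (pullback.fst h p) (pullback.lift_fst _ _ _)
  have sq : IsPushout (cokernel.π κ) (biprod.lift (pullback.fst h p) (pullback.snd h p))
      (u ≫ biprod.lift (𝟙 B) h) (biprod.map (𝟙 B) p) :=
    isPushout_of_isColimit_cokernelCofork (cokernel.condition κ)
      (by ext <;> simp [κ, pullback.lift_fst, pullback.lift_snd])
      (isColimitCokernelCoforkBiprodMap B hp)
      (by ext <;> simp [u, pullback.condition])
  have : StrongMono (u ≫ biprod.lift (𝟙 B) h) :=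
    (IsStableUnderCobaseChange.of_isPushout (P := normalMonomorphisms C) sq
      (isKernelMor_biprod_lift_pullback h p)).strongMono
  have : StrongMono u := strongMono_of_strongMono u (biprod.lift (𝟙 B) h)
  have : Epi u := epi_of_epi_fac (cokernel.π_desc κ _ _)
  have : IsIso u := isIso_of_epi_of_strongMono u
  rw [← cokernel.π_desc κ (pullback.fst h p) (pullback.lift_fst _ _ _)]
  exact RespectsIso.postcomp (normalEpimorphisms C) u _ (isCokernelMor_cokernelπ κ)

theorem MorphismProperty.isStableUnderCobaseChange_normalMonomorphisms [HasKernels C]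
    [HasPushouts C] [HasFactorization (epimorphisms C) (normalMonomorphisms C)]
    [(normalEpimorphisms C).IsStableUnderBaseChange] :
    (normalMonomorphisms C).IsStableUnderCobaseChange := by
  have : HasFactorization (normalEpimorphisms Cᵒᵖ) (monomorphisms Cᵒᵖ) := by
    rw [← normalMonomorphisms_op, ← epimorphisms_op]
    infer_instance
  have : (normalMonomorphisms Cᵒᵖ).IsStableUnderCobaseChange := by
    rw [← normalEpimorphisms_op]
    infer_instance
  have := isStableUnderBaseChange_normalEpimorphisms (C := Cᵒᵖ)
  rw [← normalMonomorphisms_op] at this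
  exact IsStableUnderBaseChange.unop (P := (normalMonomorphisms C).op)

end Preadditive

section SemiAbelian

open MorphismProperty

variable {C : Type u} [Category.{v} C] [Preadditive C] [HasKernels C] [HasCokernels C]

lemma hasFactorization_normalEpimorphisms_monomorphisms
    (h : ∀ {X Y : C} (f : X ⟶ Y), Mono (Abelian.coimageImageComparison f)) :
    HasFactorization (normalEpimorphisms C) (monomorphisms C) :=
  ⟨fun f => have := h f
    ⟨{ Z := Abelian.coimage f
       i := Abelian.coimage.π f
       p := Abelian.coimageImageComparison f ≫ Abelian.image.ι f
       hi := isCokernelMor_cokernelπ _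
       hp := mono_comp _ _ }⟩⟩

lemma hasFactorization_epimorphisms_normalMonomorphisms
    (h : ∀ {X Y : C} (f : X ⟶ Y), Epi (Abelian.coimageImageComparison f)) :
    HasFactorization (epimorphisms C) (normalMonomorphisms C) :=
  ⟨fun f => have := h f
    ⟨{ Z := Abelian.image f
       i := Abelian.coimage.π f ≫ Abelian.coimageImageComparison f
       p := Abelian.image.ι f
       hi := epi_comp _ _
       hp := isKernelMor_kernelι _ }⟩⟩

end SemiAbelian

end CategoryTheory

open CategoryTheory.MorphismProperty in
/-- Let `C` be a preadditive category with kernels, cokernels and binary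
biproducts (so that all pushouts and pullbacks exist).  If `C` is semi-abelian — for every
morphism `f` the coimage–image comparison is both a monomorphism and an epimorphism — then the
following are equivalent:
(i) every pushout of a kernel along any morphism is a kernel (`C` is right quasi-abelian);
(ii) every pullback of a cokernel along any morphism is a cokernel (`C` is left quasi-abelian). -/
theorem statement12 {C : Type u} [Category.{v} C] [Preadditive C] [HasKernels C]
    [HasCokernels C] [HasBinaryBiproducts C] [HasPushouts C] [HasPullbacks C]
    (hsemi : ∀ (X Y : C) (f : X ⟶ Y),
      Mono (Abelian.coimageImageComparison f) ∧ Epi (Abelian.coimageImageComparison f)) :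
    (∀ (A' A B' : C) (i : A' ⟶ A) (g : A' ⟶ B'),
        IsKernelMor i → IsKernelMor (pushout.inr i g)) ↔
    (∀ (A A'' B'' : C) (p : A ⟶ A'') (h : B'' ⟶ A''),
        IsCokernelMor p → IsCokernelMor (pullback.fst h p)) := by
  have := hasFactorization_normalEpimorphisms_monomorphisms fun f => (hsemi _ _ f).1
  have := hasFactorization_epimorphisms_normalMonomorphisms fun f => (hsemi _ _ f).2
  rw [← isStableUnderCobaseChange_normalMonomorphisms_iff,
    ← isStableUnderBaseChange_normalEpimorphisms_iff]
  exact ⟨fun _ => isStableUnderBaseChange_normalEpimorphisms,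
    fun _ => isStableUnderCobaseChange_normalMonomorphisms⟩
end

section
/- Let (A_n)_{n∈ℕ} be a sequence of topological abelian groups with linear topology such that for every n the closure of {0} in A_n is not an open subset (equivalently, the maximal separated quotient A_n/closure({0}) is not discrete). Then the direct sum ⊕_{n∈ℕ} A_n, equipped with the coproduct topology, does not have a countable basis of neighborhoods of 0; that is, the neighborhood filter of 0 is not countably generated. -/
/-!
In a group with linear topology, `closure {0}` is the intersection of the open subgroups; it is
itself closed-and-open as soon as some open subgroup lies in all the others. So if `closure {0}`
is not open, every open subgroup fails to be contained in some other open subgroup. Given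
countably many basic neighbourhoods `⊕ₙ U_{k,n}` of `0` in the direct sum, choose on coordinate
`k` an open subgroup `V_k ⊉ U_{k,k}`; the neighbourhood `⊕ₙ Vₙ` then contains none of them.
-/

open Filter Topology

namespace HasLinearTopology

variable {A : Type*} [AddCommGroup A] [TopologicalSpace A] [SeparatelyContinuousAdd A]

theorem mem_closure_zero_iff (hlin : HasLinearTopology A) {x : A} :
    x ∈ closure ({0} : Set A) ↔ ∀ V : AddSubgroup A, IsOpen (V : Set A) → x ∈ V := by
  constructor
  · intro hx V hV
    exact closure_minimal (by simp) (V.isClosed_of_isOpen hV) hx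
  · intro hx
    refine mem_closure_iff.mpr fun o ho hxo => ?_
    have hpre : (fun y => x + y) ⁻¹' o ∈ 𝓝 (0 : A) :=
      (ho.preimage (continuous_const_add x)).mem_nhds (by simpa using hxo)
    obtain ⟨V, hV, hVo⟩ := hlin _ hpre
    exact ⟨0, by simpa using hVo (V.neg_mem (hx V hV)), rfl⟩

theorem exists_isOpen_not_le (hlin : HasLinearTopology A)
    (hnd : ¬ IsOpen (closure ({0} : Set A))) (U : AddSubgroup A) (hU : IsOpen (U : Set A)) :
    ∃ V : AddSubgroup A, IsOpen (V : Set A) ∧ ¬ U ≤ V := by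
  by_contra! hle
  have hU_sub : (U : Set A) ⊆ closure {0} := fun x hx =>
    hlin.mem_closure_zero_iff.mpr fun V hV => hle V hV hx
  have hclosure : closure ({0} : Set A) = U :=
    (closure_minimal (by simp) (U.isClosed_of_isOpen hU)).antisymm hU_sub
  exact hnd (hclosure ▸ hU)

end HasLinearTopology

namespace DFinsupp

theorem single_mem_setOf_forall_mem {ι : Type*} [DecidableEq ι] {A : ι → Type*}
    [∀ i, AddCommGroup (A i)] (U : ∀ i, AddSubgroup (A i)) {i : ι} {x : A i} (hx : x ∈ U i) :
    single i x ∈ {f : Π₀ i, A i | ∀ j, f j ∈ U j} := by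
  intro j
  by_cases hij : j = i
  · subst hij
    simpa using hx
  · simp [single_eq_of_ne hij]

theorem not_isCountablyGenerated_of_hasBasis {ι : Type*} [Infinite ι] {A : ι → Type*}
    [∀ i, AddCommGroup (A i)] [∀ i, TopologicalSpace (A i)]
    (hstrict : ∀ i (U : AddSubgroup (A i)), IsOpen (U : Set (A i)) →
      ∃ V : AddSubgroup (A i), IsOpen (V : Set (A i)) ∧ ¬ U ≤ V)
    {l : Filter (Π₀ i, A i)}
    (hl : l.HasBasis (fun U : ∀ i, AddSubgroup (A i) => ∀ i, IsOpen (U i : Set (A i)))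
      (fun U => {f : Π₀ i, A i | ∀ i, f i ∈ U i})) :
    ¬ l.IsCountablyGenerated := by
  classical
  intro _
  obtain ⟨S, hS⟩ := l.exists_antitone_basis
  choose U hU_open hU_sub using fun k => hl.mem_iff.mp (hS.mem k)
  choose next hnext_open hnext using hstrict
  let e := Infinite.natEmbedding ι
  -- coordinate `e k` is where `V` escapes the `k`-th basic neighbourhood
  let V : ∀ i, AddSubgroup (A i) := fun i =>
    next i (U (Function.invFun e i) i) (hU_open _ i)
  obtain ⟨k, -, hk⟩ :=
    hS.toHasBasis.mem_iff.mp (hl.mem_of_mem (i := V) fun i => hnext_open i _ _)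
  have hVk : V (e k) = next (e k) (U k (e k)) (hU_open k (e k)) := by
    simp only [V, Function.leftInverse_invFun e.injective k]
  obtain ⟨x, hxU, hxV⟩ := Set.not_subset.mp (hnext (e k) _ (hU_open k (e k)))
  have hxVk := hk (hU_sub k (single_mem_setOf_forall_mem (U k) hxU)) (e k)
  rw [single_eq_same, hVk] at hxVk
  exact hxV hxVk

end DFinsupp

theorem statement13_general {A : ℕ → Type*} [∀ n, AddCommGroup (A n)]
    [∀ n, TopologicalSpace (A n)] [∀ n, IsTopologicalAddGroup (A n)]
    (hlin : ∀ n, HasLinearTopology (A n))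
    (hnd : ∀ n, ¬ IsOpen (closure ({0} : Set (A n))))
    (τ : TopologicalSpace (Π₀ n, A n))
    (hbasis : (@nhds _ τ 0).HasBasis
      (fun U : ∀ n, AddSubgroup (A n) => ∀ n, IsOpen (U n : Set (A n)))
      (fun U => {f : Π₀ n, A n | ∀ n, f n ∈ U n})) :
    ¬ (@nhds _ τ 0).IsCountablyGenerated :=
  DFinsupp.not_isCountablyGenerated_of_hasBasis
    (fun n => (hlin n).exists_isOpen_not_le (hnd n)) hbasis

/-- Let `(A n)_{n ∈ ℕ}` be a sequence of topological abelian groups with linear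
topology such that for every `n` the closure of `{0}` in `A n` is not open (equivalently, the
maximal separated quotient of `A n` is not discrete).  Then the direct sum `⊕_{n ∈ ℕ} A n`
(formalized as `Π₀ n, A n`), equipped with the coproduct topology `τ` (the group topology whose
basic neighborhoods of `0` are the subgroups `⊕ₙ Uₙ` with each `Uₙ ⊆ A n` an open subgroup),
does not have a countable basis of neighborhoods of `0`: the neighborhood filter of `0` is not
countably generated. -/
theorem statement13 {A : ℕ → Type*} [∀ n, AddCommGroup (A n)]
    [∀ n, TopologicalSpace (A n)] [∀ n, IsTopologicalAddGroup (A n)]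
    (hlin : ∀ n, HasLinearTopology (A n))
    (hnd : ∀ n, ¬ IsOpen (closure ({0} : Set (A n))))
    (τ : TopologicalSpace (Π₀ n, A n))
    (hgrp : @IsTopologicalAddGroup (Π₀ n, A n) τ _)
    (hbasis : (@nhds _ τ 0).HasBasis
      (fun U : ∀ n, AddSubgroup (A n) => ∀ n, IsOpen (U n : Set (A n)))
      (fun U => {f : Π₀ n, A n | ∀ n, f n ∈ U n})) :
    ¬ (@nhds _ τ 0).IsCountablyGenerated :=
  statement13_general hlin hnd τ hbasis
end

section
/- Let Q be a separated topological abelian group with linear topology, let I be a set, and equip A = ⊕_{i∈I} Q with the modified coproduct topology. Then every family (a_x)_{x∈X} of elements of A that converges to zero has finite support: the set {x ∈ X : a_x ≠ 0} is finite. -/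
open Filter Topology

/-!
Fix a family `a` converging to zero. The open subgroup `{f | f i = 0}` shows that each coordinate
`x ↦ a x i` has finite support, so for each `i` the finitely many nonzero values `a x i` avoid
some open subgroup `U i` of `Q` (here separatedness is used). The subgroup
`{f | ∀ i, f i ∈ U i}` is open for the modified coproduct topology, and every `x` with `a x ≠ 0`
lies outside it; hence there are only finitely many such `x`.
-/

theorem HasLinearTopology.exists_isOpen_addSubgroup_forall_notMem {A : Type*} [AddCommGroup A]
    [TopologicalSpace A] [T1Space A] (hA : HasLinearTopology A) {F : Set A} (hF : F.Finite)
    (h0 : (0 : A) ∉ F) : ∃ U : AddSubgroup A, IsOpen (U : Set A) ∧ ∀ b ∈ F, b ∉ U := by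
  obtain ⟨U, hU, hUF⟩ := hA Fᶜ (hF.isClosed.isOpen_compl.mem_nhds h0)
  exact ⟨U, hU, fun b hb hbU => hUF hbU hb⟩

namespace DFinsupp

variable {I Q : Type*} [AddCommGroup Q]

def boxAddSubgroup (J : Finset I) (U : I → AddSubgroup Q) : AddSubgroup (Π₀ _ : I, Q) where
  carrier := {f | (∀ j ∈ J, f j = 0) ∧ ∀ i ∉ J, f i ∈ U i}
  add_mem' {f g} hf hg :=
    ⟨fun j hj => by simp [hf.1 j hj, hg.1 j hj], fun i hi => by
      simpa using add_mem (hf.2 i hi) (hg.2 i hi)⟩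
  zero_mem' := ⟨fun _ _ => rfl, fun i _ => zero_mem (U i)⟩
  neg_mem' {f} hf := ⟨fun j hj => by simp [hf.1 j hj], fun i hi => by simpa using hf.2 i hi⟩

variable [TopologicalSpace Q] [TopologicalSpace (Π₀ _ : I, Q)]
  [IsTopologicalAddGroup (Π₀ _ : I, Q)]
  (hbasis : (𝓝 (0 : Π₀ _ : I, Q)).HasBasis
    (fun JU : Finset I × (I → AddSubgroup Q) => ∀ i, IsOpen (JU.2 i : Set Q))
    (fun JU => {f : Π₀ _ : I, Q | (∀ j ∈ JU.1, f j = 0) ∧ ∀ i ∉ JU.1, f i ∈ JU.2 i}))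
include hbasis

theorem isOpen_boxAddSubgroup (J : Finset I) {U : I → AddSubgroup Q}
    (hU : ∀ i, IsOpen (U i : Set Q)) : IsOpen (boxAddSubgroup J U : Set (Π₀ _ : I, Q)) :=
  AddSubgroup.isOpen_of_mem_nhds _ (hbasis.mem_of_mem (i := (J, U)) hU)

theorem finite_setOf_apply_ne_zero {X : Type*} {a : X → Π₀ _ : I, Q}
    (hconv : ∀ U : AddSubgroup (Π₀ _ : I, Q), IsOpen (U : Set (Π₀ _ : I, Q)) →
      {x | a x ∉ U}.Finite) (i : I) : {x | a x i ≠ 0}.Finite := by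
  have hopen := isOpen_boxAddSubgroup hbasis {i} (U := fun _ => ⊤) fun _ => isOpen_univ
  exact (hconv _ hopen).subset fun x hx hmem => hx (hmem.1 i (Finset.mem_singleton_self i))

end DFinsupp

theorem statement14_general {I : Type*} {Q : Type*} [AddCommGroup Q]
    [TopologicalSpace Q] [T2Space Q]
    (hQ : HasLinearTopology Q)
    (τ : TopologicalSpace (Π₀ _ : I, Q))
    (hgrp : @IsTopologicalAddGroup (Π₀ _ : I, Q) τ _)
    (hbasis : (@nhds _ τ 0).HasBasis
      (fun JU : Finset I × (I → AddSubgroup Q) => ∀ i, IsOpen (JU.2 i : Set Q))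
      (fun JU => {f : Π₀ _ : I, Q | (∀ j ∈ JU.1, f j = 0) ∧ ∀ i ∉ JU.1, f i ∈ JU.2 i}))
    {X : Type*} (a : X → (Π₀ _ : I, Q))
    (hconv : ∀ U : AddSubgroup (Π₀ _ : I, Q), @IsOpen _ τ (U : Set (Π₀ _ : I, Q)) →
      {x | a x ∉ U}.Finite) :
    {x | a x ≠ 0}.Finite := by
  let := τ
  choose U hU hUa using fun i => hQ.exists_isOpen_addSubgroup_forall_notMem
    ((DFinsupp.finite_setOf_apply_ne_zero hbasis hconv i).image (a · i)) (by simp)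
  refine (hconv _ (DFinsupp.isOpen_boxAddSubgroup hbasis ∅ hU)).subset fun x hx hmem => ?_
  obtain ⟨i, hi⟩ : ∃ i, a x i ≠ 0 := by
    by_contra! h
    exact hx (DFinsupp.ext h)
  exact hUa i _ ⟨x, hi, rfl⟩ (hmem.2 i (Finset.notMem_empty i))

/-- Let `Q` be a separated topological abelian group with linear topology, let
`I` be a set, and equip `A = ⊕_{i ∈ I} Q` (formalized as `Π₀ _ : I, Q`) with the modified
coproduct topology `τ` — the group topology whose basic neighborhoods of `0` are the subgroups
`⊕_{j ∈ J} {0} ⊕ ⊕_{l ∉ J} U l` with `J ⊆ I` finite and `U l ⊆ Q` open subgroups.  Then every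
family `(a x)_{x ∈ X}` of elements of `A` converging to zero (meaning: for every `τ`-open
subgroup `U` of `A`, the set `{x | a x ∉ U}` is finite) has finite support:
`{x | a x ≠ 0}` is finite. -/
theorem statement14 {I : Type*} {Q : Type*} [AddCommGroup Q]
    [TopologicalSpace Q] [IsTopologicalAddGroup Q] [T2Space Q]
    (hQ : HasLinearTopology Q)
    (τ : TopologicalSpace (Π₀ _ : I, Q))
    (hgrp : @IsTopologicalAddGroup (Π₀ _ : I, Q) τ _)
    (hbasis : (@nhds _ τ 0).HasBasis
      (fun JU : Finset I × (I → AddSubgroup Q) => ∀ i, IsOpen (JU.2 i : Set Q))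
      (fun JU => {f : Π₀ _ : I, Q | (∀ j ∈ JU.1, f j = 0) ∧ ∀ i ∉ JU.1, f i ∈ JU.2 i}))
    {X : Type*} (a : X → (Π₀ _ : I, Q))
    (hconv : ∀ U : AddSubgroup (Π₀ _ : I, Q), @IsOpen _ τ (U : Set (Π₀ _ : I, Q)) →
      {x | a x ∉ U}.Finite) :
    {x | a x ≠ 0}.Finite :=
  statement14_general hQ τ hgrp hbasis a hconv
end

section
/- Let A be a complete, separated topological abelian group with linear topology, and let K ⊆ A be a closed subgroup such that K, with the subspace topology, has a countable basis of neighborhoods of 0. Let π : A → A/K be the projection onto the quotient group equipped with the quotient topology, and let X be any set. Then every family (c_x)_{x∈X} of elements of A/K that converges to zero lifts to a family converging to zero in A: there exists a family (a_x)_{x∈X} of elements of A converging to zero with π(a_x) = c_x for all x ∈ X. -/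
/-! As `0` has a countable basis of neighbourhoods in `K`, there are open subgroups
`U 0 ⊇ U 1 ⊇ ⋯` of `A` whose traces on `K` form such a basis. Lift each `c x` to some `a x`
lying in `U n` whenever `c x ∈ π (U n)`. If there is a largest such `n`, any lift in that `U n`
will do; otherwise lifts `bₙ ∈ U n` form a Cauchy sequence, as `bₘ - bₙ ∈ U n ∩ K` for `m ≥ n`,
and their limit works because `K` and the `U n` are closed. Given an open subgroup
`V ⊇ U n ∩ K`, every `x` with `c x ∈ π (V ∩ U n)` has `a x ∈ V`, and `π (V ∩ U n)` is an open
subgroup of `A ⧸ K`. -/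

open Filter Topology

/-- A family `(a x)_{x ∈ X}` of elements of a topological abelian group with linear topology
converges to zero if for every open subgroup `U` the set `{x | a x ∉ U}` is finite. -/
def ConvergesToZero {A : Type*} [AddCommGroup A] [TopologicalSpace A] {X : Type*}
    (a : X → A) : Prop :=
  ∀ U : AddSubgroup A, IsOpen (U : Set A) → {x | a x ∉ U}.Finite

section OpenSubgroups

variable {A : Type*} [AddCommGroup A] [TopologicalSpace A]

def TraceIsNhdsBasis (K : AddSubgroup A) (U : ℕ → OpenAddSubgroup A) : Prop :=
  ∀ s ∈ 𝓝 (0 : A), ∃ n, (U n : Set A) ∩ K ⊆ s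

theorem exists_antitone_traceIsNhdsBasis (hlin : HasLinearTopology A)
    (K : AddSubgroup A) [(𝓝 (0 : K)).IsCountablyGenerated] :
    ∃ U : ℕ → OpenAddSubgroup A, Antitone U ∧ U 0 = ⊤ ∧ TraceIsNhdsBasis K U := by
  obtain ⟨t, ht⟩ := (𝓝 (0 : K)).exists_antitone_basis
  have hW : ∀ n, ∃ W : OpenAddSubgroup A, ∀ k : K, (k : A) ∈ W → k ∈ t n := by
    intro n
    have htn : t n ∈ Filter.comap ((↑) : K → A) (𝓝 0) := by
      rw [← nhds_subtype_eq_comap]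
      exact ht.mem n
    obtain ⟨r, hr, hrt⟩ := Filter.mem_comap.mp htn
    obtain ⟨W, hWo, hWr⟩ := hlin r hr
    exact ⟨⟨W, hWo⟩, fun k hk => hrt (hWr hk)⟩
  choose W hWt using hW
  refine ⟨fun n => (Finset.range n).inf W, fun m n hmn => Finset.inf_mono (by simpa using hmn),
    Finset.inf_empty, fun s hs => ?_⟩
  have hsK : (↑) ⁻¹' s ∈ 𝓝 (0 : K) := continuous_subtype_val.continuousAt.preimage_mem_nhds hs
  obtain ⟨n, hn⟩ := ht.mem_iff.mp hsK
  refine ⟨n + 1, fun b ⟨hbU, hbK⟩ => hn (hWt n ⟨b, hbK⟩ ?_)⟩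
  exact Finset.inf_le (f := W) (Finset.self_mem_range_succ n) hbU

end OpenSubgroups

section Lifting

variable {A : Type*} [AddCommGroup A] {K : AddSubgroup A}

section Complete

variable [UniformSpace A] [IsUniformAddGroup A] [CompleteSpace A] {U : ℕ → OpenAddSubgroup A}

theorem exists_mk_eq_forall_mem_of_forall_mem_image (hK : IsClosed (K : Set A))
    (hU : Antitone U) (hUK : TraceIsNhdsBasis K U) {c : A ⧸ K}
    (hc : ∀ n, c ∈ ((↑) : A → A ⧸ K) '' U n) :
    ∃ a : A, (a : A ⧸ K) = c ∧ ∀ n, a ∈ U n := by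
  choose b hbU hbc using hc
  have hbK : ∀ m n, b n - b m ∈ K := fun m n => by
    rw [← QuotientAddGroup.eq_iff_sub_mem, hbc, hbc]
  have hcauchy : CauchySeq b := by
    rw [cauchySeq_iff_tendsto, uniformity_eq_comap_nhds_zero A, tendsto_comap_iff]
    intro s hs
    obtain ⟨n, hn⟩ := hUK s hs
    rw [Filter.mem_map]
    refine Filter.mem_of_superset (Filter.Ici_mem_atTop (n, n)) fun p hp => ?_
    exact hn ⟨sub_mem (hU hp.2 (hbU p.2)) (hU hp.1 (hbU p.1)), hbK _ _⟩
  obtain ⟨a, ha⟩ := cauchySeq_tendsto_of_complete hcauchy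
  refine ⟨a, ?_, fun n => ?_⟩
  · have haK : a - b 0 ∈ K :=
      hK.mem_of_tendsto (ha.sub_const _) (Filter.Eventually.of_forall (hbK 0))
    rw [← hbc 0]
    exact QuotientAddGroup.eq_iff_sub_mem.mpr haK
  · refine (U n).isClosed.mem_of_tendsto ha ?_
    filter_upwards [Filter.eventually_ge_atTop n] with m hm
    exact hU hm (hbU m)

theorem exists_mk_eq_forall_mem_of_mem_image (hK : IsClosed (K : Set A))
    (hU : Antitone U) (hU0 : U 0 = ⊤) (hUK : TraceIsNhdsBasis K U) (c : A ⧸ K) :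
    ∃ a : A, (a : A ⧸ K) = c ∧ ∀ n, c ∈ ((↑) : A → A ⧸ K) '' U n → a ∈ U n := by
  classical
  by_cases hall : ∀ n, c ∈ ((↑) : A → A ⧸ K) '' U n
  · obtain ⟨a, hac, ha⟩ := exists_mk_eq_forall_mem_of_forall_mem_image hK hU hUK hall
    exact ⟨a, hac, fun n _ => ha n⟩
  obtain ⟨m, hm⟩ := not_forall.mp hall
  have hlt : ∀ n, c ∈ ((↑) : A → A ⧸ K) '' U n → n < m := fun n hn => by
    by_contra! hmn
    exact hm (Set.image_mono (hU hmn) hn)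
  have h0 : c ∈ ((↑) : A → A ⧸ K) '' U 0 := by
    obtain ⟨a, rfl⟩ := QuotientAddGroup.mk_surjective c
    exact ⟨a, hU0 ▸ OpenAddSubgroup.mem_top a, rfl⟩
  -- lift `c` at the deepest level at which it lifts at all
  obtain ⟨a, haU, hac⟩ :=
    Nat.findGreatest_spec (P := fun n => c ∈ ((↑) : A → A ⧸ K) '' U n) (Nat.zero_le m) h0
  exact ⟨a, hac, fun n hn => hU (Nat.le_findGreatest (hlt n hn).le hn) haU⟩

end Complete

theorem convergesToZero_of_mk_convergesToZero [TopologicalSpace A] [IsTopologicalAddGroup A]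
    {U : ℕ → OpenAddSubgroup A} (hUK : TraceIsNhdsBasis K U)
    {X : Type*} {a : X → A}
    (ha : ∀ x n, (a x : A ⧸ K) ∈ ((↑) : A → A ⧸ K) '' U n → a x ∈ U n)
    (hc : ConvergesToZero fun x => (a x : A ⧸ K)) :
    ConvergesToZero a := by
  intro V hV
  obtain ⟨n, hn⟩ := hUK V (hV.mem_nhds V.zero_mem)
  let Q : AddSubgroup (A ⧸ K) := (V ⊓ (U n : AddSubgroup A)).map (QuotientAddGroup.mk' K)
  have hQ : IsOpen (Q : Set (A ⧸ K)) :=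
    QuotientAddGroup.isOpenMap_coe _ (hV.inter (U n).isOpen)
  refine (hc Q hQ).subset fun x hxV hxQ => hxV ?_
  obtain ⟨w, ⟨hwV, hwU⟩, hwa⟩ := AddSubgroup.mem_map.mp hxQ
  have hawK : a x - w ∈ K := by
    rw [← QuotientAddGroup.eq_iff_sub_mem]
    exact hwa.symm
  have haU : a x ∈ U n := ha x n ⟨w, hwU, hwa⟩
  simpa using add_mem (hn ⟨sub_mem haU hwU, hawK⟩) hwV

end Lifting

theorem statement15_general {A : Type*} [AddCommGroup A] [TopologicalSpace A] [IsTopologicalAddGroup A]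
    (hlin : HasLinearTopology A) (hcomp : IsCompleteTAG A)
    (K : AddSubgroup A) (hK : IsClosed (K : Set A))
    (hKcount : (nhds (0 : K)).IsCountablyGenerated)
    {X : Type*} (c : X → A ⧸ K) (hc : ConvergesToZero c) :
    ∃ a : X → A, ConvergesToZero a ∧ ∀ x, (QuotientAddGroup.mk (a x) : A ⧸ K) = c x := by
  let _ : UniformSpace A := IsTopologicalAddGroup.rightUniformSpace A
  have _ : IsUniformAddGroup A := isUniformAddGroup_of_addCommGroup
  have _ : CompleteSpace A := hcomp
  obtain ⟨U, hU, hU0, hUK⟩ := exists_antitone_traceIsNhdsBasis hlin K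
  choose a hac ha using exists_mk_eq_forall_mem_of_mem_image hK hU hU0 hUK
  refine ⟨a ∘ c, convergesToZero_of_mk_convergesToZero hUK (fun x n => ?_) ?_, fun x => hac _⟩
  · simpa only [Function.comp_apply, hac] using ha (c x) n
  · simpa only [Function.comp_def, hac] using hc

/-- Let `A` be a complete, separated topological abelian group with linear
topology, let `K ⊆ A` be a closed subgroup which, with the subspace topology, has a countable
basis of neighborhoods of `0`, let `π : A → A ⧸ K` be the projection onto the quotient with the
quotient topology, and let `X` be a set.  Then every family `(c x)_{x ∈ X}` of elements of
`A ⧸ K` converging to zero lifts to a family converging to zero in `A`. -/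
theorem statement15 {A : Type*} [AddCommGroup A] [TopologicalSpace A] [IsTopologicalAddGroup A]
    (hlin : HasLinearTopology A) [T2Space A] (hcomp : IsCompleteTAG A)
    (K : AddSubgroup A) (hK : IsClosed (K : Set A))
    (hKcount : (nhds (0 : K)).IsCountablyGenerated)
    {X : Type*} (c : X → A ⧸ K) (hc : ConvergesToZero c) :
    ∃ a : X → A, ConvergesToZero a ∧ ∀ x, (QuotientAddGroup.mk (a x) : A ⧸ K) = c x :=
  statement15_general hlin hcomp K hK hKcount c hc
end

section
/- Let k be a field with the discrete topology, and let p : U → C and q : V → D be open, surjective, continuous k-linear maps between topological k-vector spaces with linear topology. Then the induced k-linear map p ⊗ q : U ⊗_k V → C ⊗_k D is surjective, and it is continuous and open with respect to each of the three tensor product topologies: as a map U ⊗^* V → C ⊗^* D, as a map U ⊗^λ V → C ⊗^λ D, and as a map U ⊗^! V → C ⊗^! D. -/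
/-!
Since `(p ⊗ q)(S·T) = p(S)·q(T)`, the linear map `p ⊗ q` carries each kind of basic
neighbourhood of `0` in `U ⊗ V` onto one of the same kind in `C ⊗ D` (this uses that `p`, `q`
are open and surjective), and pulls each basic neighbourhood of `C ⊗ D` back to one of the same
kind (this uses continuity). For an additive homomorphism of topological groups these two facts are
exactly openness and continuity.
-/

open Filter Topology TensorProduct

section TensorTopologies

variable {k U V : Type*} [CommRing k] [AddCommGroup U] [Module k U]
  [AddCommGroup V] [Module k V] [TopologicalSpace U] [TopologicalSpace V]

/-- `S·T`: the image of `S ⊗ T` in `U ⊗[k] V`, i.e. the span of the elementary tensors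
`s ⊗ₜ t` with `s ∈ S`, `t ∈ T`. -/
def tensorImage (S : Submodule k U) (T : Submodule k V) : Submodule k (U ⊗[k] V) :=
  Submodule.span k {w | ∃ s ∈ S, ∃ t ∈ T, w = s ⊗ₜ[k] t}

/-- The condition for a subspace `E ⊆ U ⊗ V` to be a basic neighborhood of `0` in the
`*`-topology. -/
def StarCond (E : Submodule k (U ⊗[k] V)) : Prop :=
  (∃ (P : Submodule k U) (Q : Submodule k V), IsOpen (P : Set U) ∧ IsOpen (Q : Set V) ∧
      tensorImage P Q ≤ E) ∧
  (∀ u : U, ∃ Q : Submodule k V, IsOpen (Q : Set V) ∧ ∀ q ∈ Q, u ⊗ₜ[k] q ∈ E) ∧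
  (∀ v : V, ∃ P : Submodule k U, IsOpen (P : Set U) ∧ ∀ p ∈ P, p ⊗ₜ[k] v ∈ E)

/-- The condition for a subspace `E ⊆ U ⊗ V` to be a basic neighborhood of `0` in the
`λ`-topology. -/
def LambdaCond (E : Submodule k (U ⊗[k] V)) : Prop :=
  (∃ P : Submodule k U, IsOpen (P : Set U) ∧ tensorImage P (⊤ : Submodule k V) ≤ E) ∧
  (∀ u : U, ∃ Q : Submodule k V, IsOpen (Q : Set V) ∧ ∀ q ∈ Q, u ⊗ₜ[k] q ∈ E)

/-- `τ` is the `*`-topology on `U ⊗[k] V`: a group topology in which the subspaces satisfying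
`StarCond` form a basis of neighborhoods of `0`. -/
def IsStarTopology (τ : TopologicalSpace (U ⊗[k] V)) : Prop :=
  @IsTopologicalAddGroup (U ⊗[k] V) τ _ ∧
  (@nhds _ τ 0).HasBasis (fun E : Submodule k (U ⊗[k] V) => StarCond E)
    (fun E => (E : Set (U ⊗[k] V)))

/-- `τ` is the `λ`-topology on `U ⊗[k] V`. -/
def IsLambdaTopology (τ : TopologicalSpace (U ⊗[k] V)) : Prop :=
  @IsTopologicalAddGroup (U ⊗[k] V) τ _ ∧
  (@nhds _ τ 0).HasBasis (fun E : Submodule k (U ⊗[k] V) => LambdaCond E)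
    (fun E => (E : Set (U ⊗[k] V)))

/-- `τ` is the `!`-topology on `U ⊗[k] V`: a group topology in which the subspaces
`P·V + U·Q`, with `P ⊆ U` and `Q ⊆ V` open subspaces, form a basis of neighborhoods of `0`. -/
def IsShriekTopology (τ : TopologicalSpace (U ⊗[k] V)) : Prop :=
  @IsTopologicalAddGroup (U ⊗[k] V) τ _ ∧
  (@nhds _ τ 0).HasBasis
    (fun PQ : Submodule k U × Submodule k V =>
      IsOpen (PQ.1 : Set U) ∧ IsOpen (PQ.2 : Set V))
    (fun PQ => ((tensorImage PQ.1 (⊤ : Submodule k V) ⊔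
      tensorImage (⊤ : Submodule k U) PQ.2 : Submodule k (U ⊗[k] V)) : Set (U ⊗[k] V)))

end TensorTopologies

section TensorImage

variable {k U V C D : Type*} [CommRing k]
  [AddCommGroup U] [Module k U] [AddCommGroup V] [Module k V]
  [AddCommGroup C] [Module k C] [AddCommGroup D] [Module k D]
  (p : U →ₗ[k] C) (q : V →ₗ[k] D)

theorem tensorImage_mono {S S' : Submodule k U} {T T' : Submodule k V}
    (hS : S ≤ S') (hT : T ≤ T') : tensorImage S T ≤ tensorImage S' T' :=
  Submodule.span_mono fun _ ⟨s, hs, t, ht, h⟩ => ⟨s, hS hs, t, hT ht, h⟩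

theorem tensorImage_map (S : Submodule k U) (T : Submodule k V) :
    tensorImage (S.map p) (T.map q) = (tensorImage S T).map (TensorProduct.map p q) := by
  rw [tensorImage, tensorImage, Submodule.map_span]
  congr 1
  ext w
  constructor
  · rintro ⟨_, ⟨s, hs, rfl⟩, _, ⟨t, ht, rfl⟩, rfl⟩
    exact ⟨s ⊗ₜ t, ⟨s, hs, t, ht, rfl⟩, TensorProduct.map_tmul p q s t⟩
  · rintro ⟨_, ⟨s, hs, t, ht, rfl⟩, rfl⟩
    exact ⟨p s, ⟨s, hs, rfl⟩, q t, ⟨t, ht, rfl⟩, TensorProduct.map_tmul p q s t⟩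

theorem tensorImage_comap_le (S : Submodule k C) (T : Submodule k D) :
    tensorImage (S.comap p) (T.comap q) ≤ (tensorImage S T).comap (TensorProduct.map p q) := by
  rw [← Submodule.map_le_iff_le_comap, ← tensorImage_map]
  exact tensorImage_mono (Submodule.map_comap_le p S) (Submodule.map_comap_le q T)

variable {p q}

theorem Submodule.map_top_of_surjective {f : U →ₗ[k] C} (hf : Function.Surjective f) :
    (⊤ : Submodule k U).map f = ⊤ := by
  rw [Submodule.map_top, LinearMap.range_eq_top.mpr hf]

theorem sup_tensorImage_top_comap_le (P : Submodule k C) (Q : Submodule k D) :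
    tensorImage (P.comap p) ⊤ ⊔ tensorImage ⊤ (Q.comap q) ≤
      (tensorImage P ⊤ ⊔ tensorImage ⊤ Q).comap (TensorProduct.map p q) := by
  rw [← Submodule.comap_top q, ← Submodule.comap_top p]
  exact sup_le ((tensorImage_comap_le p q P ⊤).trans (Submodule.comap_mono le_sup_left))
    ((tensorImage_comap_le p q ⊤ Q).trans (Submodule.comap_mono le_sup_right))

theorem sup_tensorImage_top_map (hps : Function.Surjective p) (hqs : Function.Surjective q)
    (P : Submodule k U) (Q : Submodule k V) :
    tensorImage (P.map p) ⊤ ⊔ tensorImage ⊤ (Q.map q) =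
      (tensorImage P ⊤ ⊔ tensorImage ⊤ Q).map (TensorProduct.map p q) := by
  rw [Submodule.map_sup, ← tensorImage_map, ← tensorImage_map,
    Submodule.map_top_of_surjective hps, Submodule.map_top_of_surjective hqs]

end TensorImage

section Slices

variable {k U V C D : Type*} [CommRing k]
  [AddCommGroup U] [Module k U] [AddCommGroup V] [Module k V]
  [AddCommGroup C] [Module k C] [AddCommGroup D] [Module k D]
  {p : U →ₗ[k] C} {q : V →ₗ[k] D}

theorem Submodule.isOpen_map_of_isOpenMap [TopologicalSpace U] [TopologicalSpace C]
    {f : U →ₗ[k] C} (hf : IsOpenMap f)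
    {P : Submodule k U} (hP : IsOpen (P : Set U)) : IsOpen (P.map f : Set C) := by
  rw [Submodule.map_coe]
  exact hf _ hP

theorem exists_isOpen_tmul_mem_comap [TopologicalSpace V] [TopologicalSpace D]
    (hqc : Continuous q) {E : Submodule k (C ⊗[k] D)} {u : U}
    (h : ∃ Q : Submodule k D, IsOpen (Q : Set D) ∧ ∀ d ∈ Q, p u ⊗ₜ[k] d ∈ E) :
    ∃ Q : Submodule k V, IsOpen (Q : Set V) ∧
      ∀ v ∈ Q, u ⊗ₜ[k] v ∈ E.comap (TensorProduct.map p q) := by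
  obtain ⟨Q, hQ, hQE⟩ := h
  exact ⟨Q.comap q, hQ.preimage hqc, fun v hv => by simpa using hQE (q v) hv⟩

theorem exists_isOpen_mem_comap_tmul [TopologicalSpace U] [TopologicalSpace C]
    (hpc : Continuous p) {E : Submodule k (C ⊗[k] D)} {v : V}
    (h : ∃ P : Submodule k C, IsOpen (P : Set C) ∧ ∀ c ∈ P, c ⊗ₜ[k] q v ∈ E) :
    ∃ P : Submodule k U, IsOpen (P : Set U) ∧
      ∀ u ∈ P, u ⊗ₜ[k] v ∈ E.comap (TensorProduct.map p q) := by
  obtain ⟨P, hP, hPE⟩ := h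
  exact ⟨P.comap p, hP.preimage hpc, fun u hu => by simpa using hPE (p u) hu⟩

theorem exists_isOpen_tmul_mem_map [TopologicalSpace V] [TopologicalSpace D]
    (hqo : IsOpenMap q) {E : Submodule k (U ⊗[k] V)} {u : U}
    (h : ∃ Q : Submodule k V, IsOpen (Q : Set V) ∧ ∀ v ∈ Q, u ⊗ₜ[k] v ∈ E) :
    ∃ Q : Submodule k D, IsOpen (Q : Set D) ∧
      ∀ d ∈ Q, p u ⊗ₜ[k] d ∈ E.map (TensorProduct.map p q) := by
  obtain ⟨Q, hQ, hQE⟩ := h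
  refine ⟨Q.map q, Submodule.isOpen_map_of_isOpenMap hqo hQ, ?_⟩
  rintro _ ⟨v, hv, rfl⟩
  exact ⟨u ⊗ₜ v, hQE v hv, TensorProduct.map_tmul p q u v⟩

theorem exists_isOpen_mem_map_tmul [TopologicalSpace U] [TopologicalSpace C]
    (hpo : IsOpenMap p) {E : Submodule k (U ⊗[k] V)} {v : V}
    (h : ∃ P : Submodule k U, IsOpen (P : Set U) ∧ ∀ u ∈ P, u ⊗ₜ[k] v ∈ E) :
    ∃ P : Submodule k C, IsOpen (P : Set C) ∧
      ∀ c ∈ P, c ⊗ₜ[k] q v ∈ E.map (TensorProduct.map p q) := by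
  obtain ⟨P, hP, hPE⟩ := h
  refine ⟨P.map p, Submodule.isOpen_map_of_isOpenMap hpo hP, ?_⟩
  rintro _ ⟨u, hu, rfl⟩
  exact ⟨u ⊗ₜ v, hPE u hu, TensorProduct.map_tmul p q u v⟩

end Slices

section Conditions

variable {k U V C D : Type*} [CommRing k]
  [AddCommGroup U] [Module k U] [TopologicalSpace U]
  [AddCommGroup V] [Module k V] [TopologicalSpace V]
  [AddCommGroup C] [Module k C] [TopologicalSpace C]
  [AddCommGroup D] [Module k D] [TopologicalSpace D]
  {p : U →ₗ[k] C} {q : V →ₗ[k] D}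

theorem StarCond.comap (hpc : Continuous p) (hqc : Continuous q) {E : Submodule k (C ⊗[k] D)}
    (hE : StarCond E) : StarCond (E.comap (TensorProduct.map p q)) := by
  obtain ⟨⟨P, Q, hP, hQ, hPQ⟩, hright, hleft⟩ := hE
  exact ⟨⟨P.comap p, Q.comap q, hP.preimage hpc, hQ.preimage hqc,
      (tensorImage_comap_le p q P Q).trans (Submodule.comap_mono hPQ)⟩,
    fun u => exists_isOpen_tmul_mem_comap hqc (hright (p u)),
    fun v => exists_isOpen_mem_comap_tmul hpc (hleft (q v))⟩

theorem StarCond.map (hpo : IsOpenMap p) (hqo : IsOpenMap q) (hps : Function.Surjective p)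
    (hqs : Function.Surjective q) {E : Submodule k (U ⊗[k] V)} (hE : StarCond E) :
    StarCond (E.map (TensorProduct.map p q)) := by
  obtain ⟨⟨P, Q, hP, hQ, hPQ⟩, hright, hleft⟩ := hE
  refine ⟨⟨P.map p, Q.map q, Submodule.isOpen_map_of_isOpenMap hpo hP,
      Submodule.isOpen_map_of_isOpenMap hqo hQ,
      (tensorImage_map p q P Q).trans_le (Submodule.map_mono hPQ)⟩, fun c => ?_, fun d => ?_⟩
  · obtain ⟨u, rfl⟩ := hps c
    exact exists_isOpen_tmul_mem_map hqo (hright u)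
  · obtain ⟨v, rfl⟩ := hqs d
    exact exists_isOpen_mem_map_tmul hpo (hleft v)

theorem LambdaCond.comap (hpc : Continuous p) (hqc : Continuous q)
    {E : Submodule k (C ⊗[k] D)} (hE : LambdaCond E) :
    LambdaCond (E.comap (TensorProduct.map p q)) := by
  obtain ⟨⟨P, hP, hPE⟩, hright⟩ := hE
  refine ⟨⟨P.comap p, hP.preimage hpc, ?_⟩,
    fun u => exists_isOpen_tmul_mem_comap hqc (hright (p u))⟩
  rw [← Submodule.comap_top q]
  exact (tensorImage_comap_le p q P ⊤).trans (Submodule.comap_mono hPE)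

theorem LambdaCond.map (hpo : IsOpenMap p) (hqo : IsOpenMap q) (hps : Function.Surjective p)
    (hqs : Function.Surjective q) {E : Submodule k (U ⊗[k] V)} (hE : LambdaCond E) :
    LambdaCond (E.map (TensorProduct.map p q)) := by
  obtain ⟨⟨P, hP, hPE⟩, hright⟩ := hE
  refine ⟨⟨P.map p, Submodule.isOpen_map_of_isOpenMap hpo hP, ?_⟩, fun c => ?_⟩
  · rw [← Submodule.map_top_of_surjective hqs, tensorImage_map]
    exact Submodule.map_mono hPE
  · obtain ⟨u, rfl⟩ := hps c
    exact exists_isOpen_tmul_mem_map hqo (hright u)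

end Conditions

section TopologicalAddGroup

variable {G H : Type*} [AddCommGroup G] [TopologicalSpace G] [IsTopologicalAddGroup G]
  [AddCommGroup H] [TopologicalSpace H] [IsTopologicalAddGroup H]
  {ιG ιH : Sort*} {pG : ιG → Prop} {sG : ιG → Set G} {pH : ιH → Prop} {sH : ιH → Set H}

theorem AddMonoidHom.continuous_of_hasBasis_nhds_zero (hG : (𝓝 (0 : G)).HasBasis pG sG)
    (hH : (𝓝 (0 : H)).HasBasis pH sH) (f : G →+ H)
    (hf : ∀ j, pH j → ∃ i, pG i ∧ Set.MapsTo f (sG i) (sH j)) : Continuous f := by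
  refine continuous_of_continuousAt_zero f ?_
  rw [ContinuousAt, map_zero, hG.tendsto_iff hH]
  exact hf

theorem AddMonoidHom.isOpenMap_of_hasBasis_nhds_zero (hG : (𝓝 (0 : G)).HasBasis pG sG)
    (hH : (𝓝 (0 : H)).HasBasis pH sH) (f : G →+ H)
    (hf : ∀ i, pG i → ∃ j, pH j ∧ sH j ⊆ f '' sG i) : IsOpenMap f := by
  rw [IsTopologicalAddGroup.isOpenMap_iff_nhds_zero, (hG.map f).ge_iff]
  intro i hi
  obtain ⟨j, hj, hji⟩ := hf i hi
  exact Filter.mem_of_superset (hH.mem_of_mem hj) hji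

end TopologicalAddGroup

section TensorTopologyMaps

variable {k U V C D : Type*} [CommRing k]
  [AddCommGroup U] [Module k U] [TopologicalSpace U]
  [AddCommGroup V] [Module k V] [TopologicalSpace V]
  [AddCommGroup C] [Module k C] [TopologicalSpace C]
  [AddCommGroup D] [Module k D] [TopologicalSpace D]
  {p : U →ₗ[k] C} {q : V →ₗ[k] D}
  {τ : TopologicalSpace (U ⊗[k] V)} {σ : TopologicalSpace (C ⊗[k] D)}

theorem IsStarTopology.continuous_map (hτ : IsStarTopology τ) (hσ : IsStarTopology σ)
    (hpc : Continuous p) (hqc : Continuous q) :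
    @Continuous _ _ τ σ (TensorProduct.map p q) := by
  let _ := τ; let _ := σ; have := hτ.1; have := hσ.1
  exact (TensorProduct.map p q).toAddMonoidHom.continuous_of_hasBasis_nhds_zero hτ.2 hσ.2
    fun E hE => ⟨_, hE.comap hpc hqc, fun _ hx => hx⟩

theorem IsStarTopology.isOpenMap_map (hτ : IsStarTopology τ) (hσ : IsStarTopology σ)
    (hpo : IsOpenMap p) (hqo : IsOpenMap q) (hps : Function.Surjective p)
    (hqs : Function.Surjective q) :
    @IsOpenMap _ _ τ σ (TensorProduct.map p q) := by
  let _ := τ; let _ := σ; have := hτ.1; have := hσ.1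
  exact (TensorProduct.map p q).toAddMonoidHom.isOpenMap_of_hasBasis_nhds_zero hτ.2 hσ.2
    fun E hE => ⟨_, hE.map hpo hqo hps hqs, (Submodule.map_coe _ E).subset⟩

theorem IsLambdaTopology.continuous_map (hτ : IsLambdaTopology τ) (hσ : IsLambdaTopology σ)
    (hpc : Continuous p) (hqc : Continuous q) :
    @Continuous _ _ τ σ (TensorProduct.map p q) := by
  let _ := τ; let _ := σ; have := hτ.1; have := hσ.1
  exact (TensorProduct.map p q).toAddMonoidHom.continuous_of_hasBasis_nhds_zero hτ.2 hσ.2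
    fun E hE => ⟨_, hE.comap hpc hqc, fun _ hx => hx⟩

theorem IsLambdaTopology.isOpenMap_map (hτ : IsLambdaTopology τ) (hσ : IsLambdaTopology σ)
    (hpo : IsOpenMap p) (hqo : IsOpenMap q) (hps : Function.Surjective p)
    (hqs : Function.Surjective q) :
    @IsOpenMap _ _ τ σ (TensorProduct.map p q) := by
  let _ := τ; let _ := σ; have := hτ.1; have := hσ.1
  exact (TensorProduct.map p q).toAddMonoidHom.isOpenMap_of_hasBasis_nhds_zero hτ.2 hσ.2
    fun E hE => ⟨_, hE.map hpo hqo hps hqs, (Submodule.map_coe _ E).subset⟩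

theorem IsShriekTopology.continuous_map (hτ : IsShriekTopology τ) (hσ : IsShriekTopology σ)
    (hpc : Continuous p) (hqc : Continuous q) :
    @Continuous _ _ τ σ (TensorProduct.map p q) := by
  let _ := τ; let _ := σ; have := hτ.1; have := hσ.1
  exact (TensorProduct.map p q).toAddMonoidHom.continuous_of_hasBasis_nhds_zero hτ.2 hσ.2
    fun ⟨P, Q⟩ ⟨hP, hQ⟩ => ⟨⟨P.comap p, Q.comap q⟩,
      ⟨hP.preimage hpc, hQ.preimage hqc⟩, fun _ hx => sup_tensorImage_top_comap_le P Q hx⟩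

theorem IsShriekTopology.isOpenMap_map (hτ : IsShriekTopology τ) (hσ : IsShriekTopology σ)
    (hpo : IsOpenMap p) (hqo : IsOpenMap q) (hps : Function.Surjective p)
    (hqs : Function.Surjective q) :
    @IsOpenMap _ _ τ σ (TensorProduct.map p q) := by
  let _ := τ; let _ := σ; have := hτ.1; have := hσ.1
  refine (TensorProduct.map p q).toAddMonoidHom.isOpenMap_of_hasBasis_nhds_zero hτ.2 hσ.2
    fun ⟨P, Q⟩ ⟨hP, hQ⟩ => ⟨⟨P.map p, Q.map q⟩,
      ⟨Submodule.isOpen_map_of_isOpenMap hpo hP,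
        Submodule.isOpen_map_of_isOpenMap hqo hQ⟩, ?_⟩
  rw [sup_tensorImage_top_map hps hqs, Submodule.map_coe]
  rfl

end TensorTopologyMaps

theorem statement16_general {k : Type*} [Field k]
    {U V C D : Type*}
    [AddCommGroup U] [Module k U] [TopologicalSpace U]
    [AddCommGroup V] [Module k V] [TopologicalSpace V]
    [AddCommGroup C] [Module k C] [TopologicalSpace C]
    [AddCommGroup D] [Module k D] [TopologicalSpace D]
    (p : U →ₗ[k] C) (hpc : Continuous p) (hpo : IsOpenMap p) (hps : Function.Surjective p)
    (q : V →ₗ[k] D) (hqc : Continuous q) (hqo : IsOpenMap q) (hqs : Function.Surjective q)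
    (τs : TopologicalSpace (U ⊗[k] V)) (hτs : IsStarTopology τs)
    (τl : TopologicalSpace (U ⊗[k] V)) (hτl : IsLambdaTopology τl)
    (τe : TopologicalSpace (U ⊗[k] V)) (hτe : IsShriekTopology τe)
    (σs : TopologicalSpace (C ⊗[k] D)) (hσs : IsStarTopology σs)
    (σl : TopologicalSpace (C ⊗[k] D)) (hσl : IsLambdaTopology σl)
    (σe : TopologicalSpace (C ⊗[k] D)) (hσe : IsShriekTopology σe) :
    Function.Surjective (TensorProduct.map p q) ∧
    (@Continuous _ _ τs σs (TensorProduct.map p q) ∧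
      @IsOpenMap _ _ τs σs (TensorProduct.map p q)) ∧
    (@Continuous _ _ τl σl (TensorProduct.map p q) ∧
      @IsOpenMap _ _ τl σl (TensorProduct.map p q)) ∧
    (@Continuous _ _ τe σe (TensorProduct.map p q) ∧
      @IsOpenMap _ _ τe σe (TensorProduct.map p q)) :=
  ⟨TensorProduct.map_surjective hps hqs,
    ⟨hτs.continuous_map hσs hpc hqc, hτs.isOpenMap_map hσs hpo hqo hps hqs⟩,
    ⟨hτl.continuous_map hσl hpc hqc, hτl.isOpenMap_map hσl hpo hqo hps hqs⟩,
    ⟨hτe.continuous_map hσe hpc hqc, hτe.isOpenMap_map hσe hpo hqo hps hqs⟩⟩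

/-- Let `k` be a field with the discrete topology and let
`p : U → C`, `q : V → D` be open, surjective, continuous `k`-linear maps between topological
`k`-vector spaces with linear topology.  Then `p ⊗ q : U ⊗[k] V → C ⊗[k] D` is surjective, and
it is continuous and open with respect to each of the three tensor product topologies
(`*`, `λ` and `!`). -/
theorem statement16 {k : Type*} [Field k] [TopologicalSpace k] [DiscreteTopology k]
    {U V C D : Type*}
    [AddCommGroup U] [Module k U] [TopologicalSpace U] [IsTopologicalAddGroup U]
    [ContinuousSMul k U] (hU : HasLinearTopologyMod k U)
    [AddCommGroup V] [Module k V] [TopologicalSpace V] [IsTopologicalAddGroup V]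
    [ContinuousSMul k V] (hV : HasLinearTopologyMod k V)
    [AddCommGroup C] [Module k C] [TopologicalSpace C] [IsTopologicalAddGroup C]
    [ContinuousSMul k C] (hC : HasLinearTopologyMod k C)
    [AddCommGroup D] [Module k D] [TopologicalSpace D] [IsTopologicalAddGroup D]
    [ContinuousSMul k D] (hD : HasLinearTopologyMod k D)
    (p : U →ₗ[k] C) (hpc : Continuous p) (hpo : IsOpenMap p) (hps : Function.Surjective p)
    (q : V →ₗ[k] D) (hqc : Continuous q) (hqo : IsOpenMap q) (hqs : Function.Surjective q)
    (τs : TopologicalSpace (U ⊗[k] V)) (hτs : IsStarTopology τs)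
    (τl : TopologicalSpace (U ⊗[k] V)) (hτl : IsLambdaTopology τl)
    (τe : TopologicalSpace (U ⊗[k] V)) (hτe : IsShriekTopology τe)
    (σs : TopologicalSpace (C ⊗[k] D)) (hσs : IsStarTopology σs)
    (σl : TopologicalSpace (C ⊗[k] D)) (hσl : IsLambdaTopology σl)
    (σe : TopologicalSpace (C ⊗[k] D)) (hσe : IsShriekTopology σe) :
    Function.Surjective (TensorProduct.map p q) ∧
    (@Continuous _ _ τs σs (TensorProduct.map p q) ∧
      @IsOpenMap _ _ τs σs (TensorProduct.map p q)) ∧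
    (@Continuous _ _ τl σl (TensorProduct.map p q) ∧
      @IsOpenMap _ _ τl σl (TensorProduct.map p q)) ∧
    (@Continuous _ _ τe σe (TensorProduct.map p q) ∧
      @IsOpenMap _ _ τe σe (TensorProduct.map p q)) :=
  statement16_general p hpc hpo hps q hqc hqo hqs τs hτs τl hτl τe hτe σs hσs σl hσl σe hσe
end

section
/- Let k be a field with the discrete topology, let U and V be topological k-vector spaces with linear topology, and let K ⊆ U and L ⊆ V be dense k-subspaces. Then the image K·L of K ⊗_k L in U ⊗_k V is a dense subset of U ⊗_k V with respect to each of the three topologies U ⊗^* V, U ⊗^λ V, and U ⊗^! V. -/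
open Filter Topology TensorProduct

/-!
To approximate `u ⊗ v` modulo a basic neighborhood `E` by an element of `K·L`, use the identity
`u ⊗ v - κ ⊗ l = u ⊗ (v - l) + (u - κ) ⊗ l`: first choose `l ∈ L` with `u ⊗ (v - l) ∈ E`, then,
with `l` now fixed, choose `κ ∈ K` with `(u - κ) ⊗ l ∈ E`. This only needs `E` to contain
`u ⊗ Q_u` and `P_v ⊗ v` for open subspaces `Q_u`, `P_v`, which holds for the basic neighborhoods
of all three topologies. Since pure tensors span `U ⊗ V`, every element is then approximable.
-/

section Density

variable {G : Type*} [TopologicalSpace G] [AddCommGroup G] [IsTopologicalAddGroup G]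

theorem Dense.exists_sub_mem {S : Set G} (hS : Dense S) {O : Set G} (hO : IsOpen O)
    (h0 : (0 : G) ∈ O) (v : G) : ∃ s ∈ S, v - s ∈ O :=
  hS.exists_mem_open (hO.preimage (continuous_const.sub continuous_id)) 
    ⟨v, show v - v ∈ O from (sub_self v).symm ▸ h0⟩

theorem dense_of_hasBasis_nhds_zero {ι : Sort*} {p : ι → Prop} {s : ι → Set G}
    (hb : (𝓝 (0 : G)).HasBasis p s) {S : Set G}
    (h : ∀ i, p i → ∀ w, ∃ x ∈ S, w - x ∈ s i) : Dense S := by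
  intro w
  rw [mem_closure_iff_nhds]
  intro t ht
  have hsub : (fun z => w - z) ⁻¹' t ∈ 𝓝 (0 : G) :=
    (continuous_const.sub continuous_id).continuousAt.preimage_mem_nhds (by simpa using ht)
  obtain ⟨i, hi, hit⟩ := hb.mem_iff.mp hsub
  obtain ⟨x, hxS, hx⟩ := h i hi w
  exact ⟨x, sub_sub_cancel w x ▸ hit hx, hxS⟩

end Density

section TensorDensity

variable {k U V : Type*} [CommRing k] [AddCommGroup U] [Module k U] [AddCommGroup V] [Module k V]

theorem tmul_mem_tensorImage {S : Submodule k U} {T : Submodule k V} {s : U} {t : V}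
    (hs : s ∈ S) (ht : t ∈ T) : s ⊗ₜ[k] t ∈ tensorImage S T :=
  Submodule.subset_span ⟨s, hs, t, ht, rfl⟩

theorem TensorProduct.submodule_eq_top_of_tmul_mem {N : Submodule k (U ⊗[k] V)}
    (h : ∀ u v, u ⊗ₜ[k] v ∈ N) : N = ⊤ := by
  rw [eq_top_iff, ← TensorProduct.span_tmul_eq_top, Submodule.span_le]
  rintro _ ⟨u, v, rfl⟩
  exact h u v

variable [TopologicalSpace U] [TopologicalSpace V]

/-- Conditions (ii) and (iii) of the `*`-topology. -/
def HasOpenSlices (E : Submodule k (U ⊗[k] V)) : Prop :=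
  (∀ u : U, ∃ Q : Submodule k V, IsOpen (Q : Set V) ∧ ∀ q ∈ Q, u ⊗ₜ[k] q ∈ E) ∧
  (∀ v : V, ∃ P : Submodule k U, IsOpen (P : Set U) ∧ ∀ p ∈ P, p ⊗ₜ[k] v ∈ E)

theorem StarCond.hasOpenSlices {E : Submodule k (U ⊗[k] V)} (hE : StarCond E) :
    HasOpenSlices E :=
  hE.2

theorem LambdaCond.hasOpenSlices {E : Submodule k (U ⊗[k] V)} (hE : LambdaCond E) :
    HasOpenSlices E := by
  obtain ⟨⟨P, hP, hPE⟩, hslice⟩ := hE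
  exact ⟨hslice, fun v => ⟨P, hP, fun p hp => hPE (tmul_mem_tensorImage hp Submodule.mem_top)⟩⟩

theorem hasOpenSlices_tensorImage_sup {P : Submodule k U} {Q : Submodule k V}
    (hP : IsOpen (P : Set U)) (hQ : IsOpen (Q : Set V)) :
    HasOpenSlices (tensorImage P ⊤ ⊔ tensorImage ⊤ Q) :=
  ⟨fun _ => ⟨Q, hQ, fun _ hq => Submodule.mem_sup_right (tmul_mem_tensorImage trivial hq)⟩,
    fun _ => ⟨P, hP, fun _ hp => Submodule.mem_sup_left (tmul_mem_tensorImage hp trivial)⟩⟩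

variable [IsTopologicalAddGroup U] [IsTopologicalAddGroup V]

theorem HasOpenSlices.tmul_mem_tensorImage_sup {K : Submodule k U} {L : Submodule k V}
    (hK : Dense (K : Set U)) (hL : Dense (L : Set V)) {E : Submodule k (U ⊗[k] V)}
    (hE : HasOpenSlices E) (u : U) (v : V) : u ⊗ₜ[k] v ∈ tensorImage K L ⊔ E := by
  obtain ⟨Q, hQ, huQ⟩ := hE.1 u
  obtain ⟨l, hl, hvl⟩ := hL.exists_sub_mem hQ Q.zero_mem v
  obtain ⟨P, hP, hPl⟩ := hE.2 l
  obtain ⟨κ, hκ, huκ⟩ := hK.exists_sub_mem hP P.zero_mem u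
  have hdiff : u ⊗ₜ[k] v - κ ⊗ₜ[k] l = u ⊗ₜ[k] (v - l) + (u - κ) ⊗ₜ[k] l := by
    rw [TensorProduct.tmul_sub, TensorProduct.sub_tmul]
    abel
  refine Submodule.mem_sup.mpr ⟨κ ⊗ₜ[k] l, tmul_mem_tensorImage hκ hl, _, ?_, add_sub_cancel _ _⟩
  rw [hdiff]
  exact E.add_mem (huQ _ hvl) (hPl _ huκ)

theorem dense_tensorImage_of_hasBasis {K : Submodule k U} {L : Submodule k V}
    (hK : Dense (K : Set U)) (hL : Dense (L : Set V)) (τ : TopologicalSpace (U ⊗[k] V))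
    (hτ : @IsTopologicalAddGroup (U ⊗[k] V) τ _) {ι : Sort*} {p : ι → Prop}
    {E : ι → Submodule k (U ⊗[k] V)} (hb : (@nhds _ τ 0).HasBasis p fun i => (E i : Set _))
    (hE : ∀ i, p i → HasOpenSlices (E i)) :
    @Dense (U ⊗[k] V) τ (tensorImage K L : Set (U ⊗[k] V)) := by
  let := τ
  refine dense_of_hasBasis_nhds_zero hb fun i hi w => ?_
  have hw : w ∈ tensorImage K L ⊔ E i := by
    rw [TensorProduct.submodule_eq_top_of_tmul_mem ((hE i hi).tmul_mem_tensorImage_sup hK hL)]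
    trivial
  obtain ⟨x, hx, y, hy, rfl⟩ := Submodule.mem_sup.mp hw
  exact ⟨x, hx, by simpa using hy⟩

end TensorDensity

theorem statement18_general {k : Type*} [Field k]
    {U V : Type*}
    [AddCommGroup U] [Module k U] [TopologicalSpace U] [IsTopologicalAddGroup U]
    [AddCommGroup V] [Module k V] [TopologicalSpace V] [IsTopologicalAddGroup V]
    (K : Submodule k U) (hK : Dense (K : Set U))
    (L : Submodule k V) (hL : Dense (L : Set V))
    (τs : TopologicalSpace (U ⊗[k] V)) (hτs : IsStarTopology τs)
    (τl : TopologicalSpace (U ⊗[k] V)) (hτl : IsLambdaTopology τl)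
    (τe : TopologicalSpace (U ⊗[k] V)) (hτe : IsShriekTopology τe) :
    @Dense (U ⊗[k] V) τs (tensorImage K L : Set (U ⊗[k] V)) ∧
    @Dense (U ⊗[k] V) τl (tensorImage K L : Set (U ⊗[k] V)) ∧
    @Dense (U ⊗[k] V) τe (tensorImage K L : Set (U ⊗[k] V)) :=
  ⟨dense_tensorImage_of_hasBasis hK hL τs hτs.1 hτs.2 fun _ => StarCond.hasOpenSlices,
    dense_tensorImage_of_hasBasis hK hL τl hτl.1 hτl.2 fun _ => LambdaCond.hasOpenSlices,
    dense_tensorImage_of_hasBasis hK hL τe hτe.1 hτe.2 fun _ hPQ =>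
      hasOpenSlices_tensorImage_sup hPQ.1 hPQ.2⟩

/-- Let `k` be a field with the discrete topology, `U` and `V` topological
`k`-vector spaces with linear topology, and `K ⊆ U`, `L ⊆ V` dense `k`-subspaces.  Then the
image `K·L` of `K ⊗ L` in `U ⊗[k] V` is dense with respect to each of the three topologies
`U ⊗* V`, `U ⊗^λ V` and `U ⊗^! V`. -/
theorem statement18 {k : Type*} [Field k] [TopologicalSpace k] [DiscreteTopology k]
    {U V : Type*}
    [AddCommGroup U] [Module k U] [TopologicalSpace U] [IsTopologicalAddGroup U]
    [ContinuousSMul k U] (hU : HasLinearTopologyMod k U)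
    [AddCommGroup V] [Module k V] [TopologicalSpace V] [IsTopologicalAddGroup V]
    [ContinuousSMul k V] (hV : HasLinearTopologyMod k V)
    (K : Submodule k U) (hK : Dense (K : Set U))
    (L : Submodule k V) (hL : Dense (L : Set V))
    (τs : TopologicalSpace (U ⊗[k] V)) (hτs : IsStarTopology τs)
    (τl : TopologicalSpace (U ⊗[k] V)) (hτl : IsLambdaTopology τl)
    (τe : TopologicalSpace (U ⊗[k] V)) (hτe : IsShriekTopology τe) :
    @Dense (U ⊗[k] V) τs (tensorImage K L : Set (U ⊗[k] V)) ∧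
    @Dense (U ⊗[k] V) τl (tensorImage K L : Set (U ⊗[k] V)) ∧
    @Dense (U ⊗[k] V) τe (tensorImage K L : Set (U ⊗[k] V)) :=
  statement18_general K hK L hL τs hτs τl hτl τe hτe
end
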